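/- arXiv:1804.09167 — 10 statements merged into one kernel-verified Lean document; each statement's English description precedes it below -/
import Mathlib

section
/- Every nonzero element of B admits a polar factorization: for every nonzero g ∈ B there exist a nonzero r ∈ A and h ∈ Δ(B) such that g = r·h. -/
/-- `f ∈ Δ(B)`: `f` is nonzero and has no real divisor with respect to the
real form `A ⊆ B`: whenever `f ∈ rB` with `r ∈ A` nonzero, `r` is a unit of `A`. -/
def Delta {B : Type} [CommRing B] (A : Subring B) (f : B) : Prop :=
  f ≠ 0 ∧ ∀ r : A, (r : B) ≠ 0 → (r : B) ∣ f → IsUnit r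

/-!
Since `B = A + iA`, `B` is a finite module over the Noetherian ring `A`, hence a Noetherian
`A`-module. Among the cyclic submodules `A ∙ h` with `g = r * h`, `0 ≠ r ∈ A`, pick a maximal one.
If `h = s * h'` with `0 ≠ s ∈ A`, then `g = (r * s) * h'` and `A ∙ h ≤ A ∙ h'`, so by maximality
`h' = a * h` for some `a ∈ A`; cancelling `h` in `h = s * a * h` makes `s` a unit.
-/

namespace Subring

variable {B : Type} [CommRing B]

theorem module_finite_of_forall_eq_add_mul (A : Subring B) (c : B)
    (h : ∀ b : B, ∃ x y : A, b = x + c * y) : Module.Finite A B := by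
  classical
  refine ⟨⟨{1, c}, eq_top_iff.mpr fun b _ => ?_⟩⟩
  obtain ⟨x, y, rfl⟩ := h b
  rw [Finset.coe_pair, Submodule.mem_span_pair]
  exact ⟨x, y, by simp [Subring.smul_def, mul_comm]⟩

variable [IsDomain B] {A : Subring B}

theorem isUnit_of_span_singleton_eq_span_singleton_mul {s : A} {h : B} (hh : h ≠ 0)
    (hspan : A ∙ h = A ∙ ((s : B) * h)) : IsUnit s := by
  obtain ⟨a, ha⟩ := Submodule.mem_span_singleton.mp (hspan ▸ Submodule.mem_span_singleton_self h)
  have hsa : ((s * a : A) : B) = 1 := by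
    refine mul_right_cancel₀ hh ?_
    rw [one_mul]
    simpa [Subring.smul_def, mul_comm, mul_left_comm] using ha
  exact .of_mul_eq_one a (Subtype.val_injective hsa)

theorem exists_eq_mul_delta [IsNoetherian A B] {g : B} (hg : g ≠ 0) :
    ∃ (r : A) (h : B), (r : B) ≠ 0 ∧ Delta A h ∧ g = r * h := by
  obtain ⟨_, ⟨r, hr, h, hgrh, rfl⟩, hmax⟩ := set_has_maximal_iff_noetherian.mpr ‹_›
    {N | ∃ r : A, (r : B) ≠ 0 ∧ ∃ h, g = r * h ∧ N = A ∙ h} ⟨_, 1, by simp, g, by simp, rfl⟩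
  have hh : h ≠ 0 := by
    rintro rfl
    exact hg (by simpa using hgrh)
  refine ⟨r, h, hr, ⟨hh, fun s hs ⟨h', hh'⟩ => ?_⟩, hgrh⟩
  subst hh'
  refine isUnit_of_span_singleton_eq_span_singleton_mul (right_ne_zero_of_mul hh) ?_
  have hle : A ∙ ((s : B) * h') ≤ A ∙ h' := by
    rw [Submodule.span_singleton_le_iff_mem, Submodule.mem_span_singleton]
    exact ⟨s, by simp [Subring.smul_def]⟩
  have hg' : g = ((r * s : A) : B) * h' := by
    rw [hgrh]
    push_cast
    ring
  have hrs : ((r * s : A) : B) ≠ 0 := by simpa using mul_ne_zero hr hs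
  exact (eq_of_le_of_not_lt hle (hmax _ ⟨r * s, hrs, h', hg', rfl⟩)).symm

end Subring

theorem exists_polar_factorization_general (B : Type) [CommRing B] [IsDomain B] [Algebra ℂ B]
    (A : Subring B)
    (hNoeth : IsNoetherianRing ↥A)
    (hdecomp : ∀ b : B, ∃! p : ↥A × ↥A,
      b = (p.1 : B) + algebraMap ℂ B Complex.I * (p.2 : B))
    (g : B) (hg : g ≠ 0) :
    ∃ (r : ↥A) (h : B), (r : B) ≠ 0 ∧ Delta A h ∧ g = (r : B) * h := by
  have : Module.Finite A B := A.module_finite_of_forall_eq_add_mul (algebraMap ℂ B Complex.I)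
    fun b => by
      obtain ⟨p, hp, -⟩ := hdecomp b
      exact ⟨p.1, p.2, hp⟩
  have := isNoetherian_of_isNoetherianRing_of_finite A B
  exact Subring.exists_eq_mul_delta hg

/-- Let `A` be a Noetherian integral `ℝ`-domain in which `ℝ` is
algebraically closed and `B = ℂ ⊗ℝ A` an integral domain (so `B = A ⊕ iA`).
Every nonzero `g ∈ B` admits a polar factorization `g = r·h` with `0 ≠ r ∈ A` and
`h ∈ Δ(B)`. -/
theorem exists_polar_factorization (B : Type) [CommRing B] [IsDomain B] [Algebra ℂ B]
    [Algebra ℝ B] [IsScalarTower ℝ ℂ B] (A : Subring B)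
    (hRmem : ∀ r : ℝ, algebraMap ℝ B r ∈ A)
    (hNoeth : IsNoetherianRing ↥A)
    (halgclosed : ∀ a ∈ A, IsAlgebraic ℝ a → ∃ r : ℝ, a = algebraMap ℝ B r)
    (hdecomp : ∀ b : B, ∃! p : ↥A × ↥A,
      b = (p.1 : B) + algebraMap ℂ B Complex.I * (p.2 : B))
    (g : B) (hg : g ≠ 0) :
    ∃ (r : ↥A) (h : B), (r : B) ≠ 0 ∧ Delta A h ∧ g = (r : B) * h :=
  exists_polar_factorization_general B A hNoeth hdecomp g hg
end

section
/- Let f ∈ B be nonzero and let f̄ denote its conjugate. If f and f̄ are relatively prime in B, meaning fB ∩ f̄B = f·f̄·B, then f ∈ Δ(B). -/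
open Ideal

theorem isRelPrime_of_inf_span_singleton_eq {R : Type*} [CommRing R] [IsDomain R] {f h : R}
    (hf : f ≠ 0) (hh : h ≠ 0) (H : span {f} ⊓ span {h} = span {f * h}) : IsRelPrime f h := by
  rintro r ⟨g, rfl⟩ ⟨k, rfl⟩
  -- `r g k` lies in both ideals, so `r g k = (r g)(r k) b`; cancelling `r g k` gives `r b = 1`.
  have hmem : r * g * k ∈ span {r * g} ⊓ span {r * k} :=
    ⟨mem_span_singleton.2 ⟨k, rfl⟩, mem_span_singleton.2 ⟨g, by ring⟩⟩
  rw [H, mem_span_singleton] at hmem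
  obtain ⟨b, hb⟩ := hmem
  have hgk : r * g * k ≠ 0 := mul_ne_zero hf (right_ne_zero_of_mul hh)
  refine IsUnit.of_mul_eq_one b (mul_left_cancel₀ hgk ?_)
  linear_combination -hb

section Decomposition

variable {B : Type*} [CommRing B] {A : Subring B} {ι : B}

theorem Subring.isUnit_of_isUnit_coe_of_unique_decomp
    (hdecomp : ∀ b : B, ∃! p : A × A, b = p.1 + ι * p.2) {r : A} (hr : IsUnit (r : B)) :
    IsUnit r := by
  obtain ⟨b, hb⟩ := hr.exists_right_inv
  obtain ⟨⟨s₁, s₂⟩, hs, -⟩ := hdecomp b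
  obtain ⟨_, -, huniq⟩ := hdecomp 1
  have h₁ : (1 : B) = ((r * s₁ : A) : B) + ι * ((r * s₂ : A) : B) := by
    push_cast
    rw [← hb, hs]
    ring
  have h₂ : (1 : B) = ((1 : A) : B) + ι * ((0 : A) : B) := by simp
  have heq : ((r * s₁, r * s₂) : A × A) = (1, 0) := (huniq _ h₁).trans (huniq _ h₂).symm
  exact IsUnit.of_mul_eq_one s₁ (congrArg Prod.fst heq)

theorem RingHom.involutive_of_map_eq_neg (hspan : ∀ b : B, ∃ p : A × A, b = p.1 + ι * p.2)
    (σ : B →+* B) (hfix : ∀ a ∈ A, σ a = a) (hι : σ ι = -ι) : Function.Involutive σ := by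
  intro b
  obtain ⟨⟨a₁, a₂⟩, rfl⟩ := hspan b
  simp [hfix _ a₁.2, hfix _ a₂.2, hι]

end Decomposition

theorem mem_Delta_of_relatively_prime_conj_general (B : Type) [CommRing B] [IsDomain B]
    [Algebra ℂ B] (A : Subring B)
    (hdecomp : ∀ b : B, ∃! p : ↥A × ↥A,
      b = (p.1 : B) + algebraMap ℂ B Complex.I * (p.2 : B))
    (σ : B →+* B)
    (hσfix : ∀ a ∈ A, σ a = a)
    (hσI : σ (algebraMap ℂ B Complex.I) = -algebraMap ℂ B Complex.I)
    (f : B) (hf : f ≠ 0)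
    (hrelprime : Ideal.span {f} ⊓ Ideal.span {σ f} = Ideal.span {f * σ f}) :
    Delta A f := by
  refine ⟨hf, fun r _ hrf => ?_⟩
  have hσ : Function.Injective σ :=
    (RingHom.involutive_of_map_eq_neg (fun b => (hdecomp b).exists) σ hσfix hσI).injective
  have hσf : σ f ≠ 0 := (map_ne_zero_iff σ hσ).2 hf
  have hrσf : (r : B) ∣ σ f := hσfix r r.2 ▸ map_dvd σ hrf
  exact Subring.isUnit_of_isUnit_coe_of_unique_decomp hdecomp
    (isRelPrime_of_inf_span_singleton_eq hf hσf hrelprime hrf hrσf)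

/-- Let `A` be a Noetherian integral `ℝ`-domain in which `ℝ` is
algebraically closed, `B = ℂ ⊗ℝ A` an integral domain (so `B = A ⊕ iA`), and `σ`
the conjugation of `B` (fixing `A` pointwise and sending `i` to `−i`).
If `f ≠ 0` and `f`, `σ f` are relatively prime, i.e. `fB ∩ f̄B = f·f̄·B`,
then `f ∈ Δ(B)`. -/
theorem mem_Delta_of_relatively_prime_conj (B : Type) [CommRing B] [IsDomain B]
    [Algebra ℂ B] [Algebra ℝ B] [IsScalarTower ℝ ℂ B] (A : Subring B)
    (hRmem : ∀ r : ℝ, algebraMap ℝ B r ∈ A)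
    (hNoeth : IsNoetherianRing ↥A)
    (halgclosed : ∀ a ∈ A, IsAlgebraic ℝ a → ∃ r : ℝ, a = algebraMap ℝ B r)
    (hdecomp : ∀ b : B, ∃! p : ↥A × ↥A,
      b = (p.1 : B) + algebraMap ℂ B Complex.I * (p.2 : B))
    (σ : B →+* B)
    (hσfix : ∀ a ∈ A, σ a = a)
    (hσI : σ (algebraMap ℂ B Complex.I) = -algebraMap ℂ B Complex.I)
    (f : B) (hf : f ≠ 0)
    (hrelprime : Ideal.span {f} ⊓ Ideal.span {σ f} = Ideal.span {f * σ f}) :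
    Delta A f :=
  mem_Delta_of_relatively_prime_conj_general B A hdecomp σ hσfix hσI f hf hrelprime
end

section
/- Let S ⊆ A∖{0} be a multiplicatively closed subset and define Ŝ = {f ∈ B : s ∈ fB for some s ∈ S}. Then S⁻¹B = ℂ ⊗_ℝ S⁻¹A, the natural group homomorphism π : Π(A) → Π(S⁻¹A) sending the class [f]_A of a nonzero f ∈ B to its class [f]_{S⁻¹A} is surjective, and its kernel is the subgroup ⟨Ŝ⟩_A of Π(A) generated by the classes [s]_A for s ∈ Ŝ; hence Π(S⁻¹A) ≅ Π(A)/⟨Ŝ⟩_A. -/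
/-- The subgroup `B* · K*` of `L* = Frac(B)*`, where `K = Frac(A)` for the real form
`A ⊆ B` (the subgroup generated by units of `B` and images of nonzero elements
of `A`). -/
noncomputable def polarN (B : Type) [CommRing B] [IsDomain B] (A : Subring B) :
    Subgroup (FractionRing B)ˣ :=
  Subgroup.closure {u : (FractionRing B)ˣ |
    (∃ b : Bˣ, (u : FractionRing B) = algebraMap B (FractionRing B) (b : B)) ∨
    (∃ a : A, (u : FractionRing B) = algebraMap B (FractionRing B) (a : B))}

/-- The class `[f]_A ∈ Π(A) = L*/(B*·K*)` of a nonzero `f ∈ B`. -/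
noncomputable def polarCls (B : Type) [CommRing B] [IsDomain B] (A : Subring B)
    (f : B) (hf : f ≠ 0) : (FractionRing B)ˣ ⧸ polarN B A :=
  QuotientGroup.mk (Units.mk0 (algebraMap B (FractionRing B) f)
    (by rwa [Ne, IsFractionRing.to_map_eq_zero_iff]))

/-- The localization `S⁻¹B`, realized as the subring of `L = Frac(B)` generated by `B`
and the inverses of elements of `S`. -/
noncomputable def locB (B : Type) [CommRing B] [IsDomain B] (S : Submonoid B) :
    Subring (FractionRing B) :=
  Subring.closure (Set.range (algebraMap B (FractionRing B)) ∪
    {x | ∃ s ∈ S, x * algebraMap B (FractionRing B) s = 1})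

/-- The localization `S⁻¹A`, realized as the subring of `L = Frac(B)` generated by `A`
and the inverses of elements of `S`. -/
noncomputable def locA (B : Type) [CommRing B] [IsDomain B] (A : Subring B)
    (S : Submonoid B) : Subring (FractionRing B) :=
  Subring.closure ((algebraMap B (FractionRing B)) '' A ∪
    {x | ∃ s ∈ S, x * algebraMap B (FractionRing B) s = 1})

/-- The subgroup `(S⁻¹B)* · Frac(S⁻¹A)*` of `L*` (note `Frac(S⁻¹A) = Frac(A) = K`). -/
noncomputable def polarNLoc (B : Type) [CommRing B] [IsDomain B] (A : Subring B)
    (S : Submonoid B) : Subgroup (FractionRing B)ˣ :=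
  Subgroup.closure {u : (FractionRing B)ˣ |
    ((u : FractionRing B) ∈ locB B S ∧
      (((u⁻¹ : (FractionRing B)ˣ) : FractionRing B) ∈ locB B S)) ∨
    (u : FractionRing B) ∈ locA B A S}

/-- The class `[f]_{S⁻¹A} ∈ Π(S⁻¹A)` of a nonzero `f ∈ B`. -/
noncomputable def polarClsLoc (B : Type) [CommRing B] [IsDomain B] (A : Subring B)
    (S : Submonoid B) (f : B) (hf : f ≠ 0) :
    (FractionRing B)ˣ ⧸ polarNLoc B A S :=
  QuotientGroup.mk (Units.mk0 (algebraMap B (FractionRing B) f)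
    (by rwa [Ne, IsFractionRing.to_map_eq_zero_iff]))

/-!
Every element of `S⁻¹B` is `f / s` with `f ∈ B`, `s ∈ S ⊆ A`, so writing `f = a + i b` gives
`f / s = a / s + i (b / s)`; uniqueness follows from uniqueness in `B` after clearing denominators.
Since `B*·K* ≤ (S⁻¹B)*·K*`, the identity of `L*` induces `π`, which is therefore surjective, and its
kernel is generated by the classes of the generators of `(S⁻¹B)*·K*`. Elements of `S⁻¹A` lie in `K`
and have trivial class; a unit `f / s` of `S⁻¹B` with inverse `g / t` has class `[f]_A` with
`f g = s t`, so `f ∈ Ŝ`; conversely every `f ∈ Ŝ` is a unit of `S⁻¹B`.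
-/

lemma eq_zero_of_add_mul_eq_zero {B : Type} [CommRing B] {A : Subring B} {ι : B}
    (hdecomp : ∀ b : B, ∃! p : A × A, b = p.1 + ι * p.2) {a b : B} (ha : a ∈ A) (hb : b ∈ A)
    (h : a + ι * b = 0) : a = 0 ∧ b = 0 := by
  have := (hdecomp 0).unique (y₁ := (⟨a, ha⟩, ⟨b, hb⟩)) (y₂ := (0, 0)) h.symm (by simp)
  simpa [Prod.ext_iff] using this

lemma algebraMap_ne_zero_of_mem {B : Type} [CommRing B] {S : Submonoid B} (hS0 : (0 : B) ∉ S)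
    {s : B} (hs : s ∈ S) : algebraMap B (FractionRing B) s ≠ 0 := by
  rw [Ne, IsFractionRing.to_map_eq_zero_iff]
  exact ne_of_mem_of_not_mem hs hS0

section Localization

variable {B : Type} [CommRing B] [IsDomain B] {A : Subring B} {S : Submonoid B}

theorem mem_locA_iff (hSA : (S : Set B) ⊆ A) (hS0 : (0 : B) ∉ S) {x : FractionRing B} :
    x ∈ locA B A S ↔ ∃ a ∈ A, ∃ s ∈ S,
      x * algebraMap B (FractionRing B) s = algebraMap B (FractionRing B) a := by
  constructor
  · intro hx
    induction hx using Subring.closure_induction with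
    | mem x hx =>
      rcases hx with ⟨a, ha, rfl⟩ | ⟨s, hs, hxs⟩
      · exact ⟨a, ha, 1, S.one_mem, by simp⟩
      · exact ⟨1, A.one_mem, s, hs, by rw [hxs, map_one]⟩
    | zero => exact ⟨0, A.zero_mem, 1, S.one_mem, by simp⟩
    | one => exact ⟨1, A.one_mem, 1, S.one_mem, by simp⟩
    | add x y _ _ hx hy =>
      obtain ⟨a, ha, s, hs, hx⟩ := hx
      obtain ⟨b, hb, t, ht, hy⟩ := hy
      refine ⟨a * t + b * s, add_mem (mul_mem ha (hSA ht)) (mul_mem hb (hSA hs)), s * t,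
        S.mul_mem hs ht, ?_⟩
      simp only [map_add, map_mul, ← hx, ← hy]
      ring
    | neg x _ hx =>
      obtain ⟨a, ha, s, hs, hx⟩ := hx
      exact ⟨-a, neg_mem ha, s, hs, by rw [map_neg, ← hx, neg_mul]⟩
    | mul x y _ _ hx hy =>
      obtain ⟨a, ha, s, hs, hx⟩ := hx
      obtain ⟨b, hb, t, ht, hy⟩ := hy
      refine ⟨a * b, mul_mem ha hb, s * t, S.mul_mem hs ht, ?_⟩
      simp only [map_mul, ← hx, ← hy]
      ring
  · rintro ⟨a, ha, s, hs, hxs⟩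
    have hs0 := algebraMap_ne_zero_of_mem hS0 hs
    rw [← eq_mul_inv_iff_mul_eq₀ hs0] at hxs
    rw [hxs]
    exact mul_mem (Subring.subset_closure (Or.inl ⟨a, ha, rfl⟩))
      (Subring.subset_closure (Or.inr ⟨s, hs, inv_mul_cancel₀ hs0⟩))

lemma locB_eq_locA_top : locB B S = locA B ⊤ S := by
  simp [locB, locA]

theorem mem_locB_iff (hS0 : (0 : B) ∉ S) {x : FractionRing B} :
    x ∈ locB B S ↔ ∃ f : B, ∃ s ∈ S,
      x * algebraMap B (FractionRing B) s = algebraMap B (FractionRing B) f := by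
  simpa [locB_eq_locA_top] using mem_locA_iff (A := ⊤) (by simp) hS0

lemma eq_zero_of_add_mul_eq_zero_of_mem_locA {ι : B}
    (hdecomp : ∀ b : B, ∃! p : A × A, b = p.1 + ι * p.2) (hSA : (S : Set B) ⊆ A) (hS0 : (0 : B) ∉ S)
    {y z : FractionRing B} (hy : y ∈ locA B A S) (hz : z ∈ locA B A S)
    (h : y + algebraMap B (FractionRing B) ι * z = 0) : y = 0 ∧ z = 0 := by
  set φ := algebraMap B (FractionRing B)
  obtain ⟨a, ha, s, hs, hya⟩ := (mem_locA_iff hSA hS0).mp hy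
  obtain ⟨b, hb, t, ht, hzb⟩ := (mem_locA_iff hSA hS0).mp hz
  have hst : φ s * φ t ≠ 0 :=
    mul_ne_zero (algebraMap_ne_zero_of_mem hS0 hs) (algebraMap_ne_zero_of_mem hS0 ht)
  have hB : a * t + ι * (b * s) = 0 := by
    apply (IsFractionRing.to_map_eq_zero_iff (K := FractionRing B)).mp
    simp only [map_add, map_mul, ← hya, ← hzb]
    linear_combination φ s * φ t * h
  obtain ⟨hat, hbs⟩ := eq_zero_of_add_mul_eq_zero hdecomp (mul_mem ha (hSA ht))
    (mul_mem hb (hSA hs)) hB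
  constructor
  · have : y * (φ s * φ t) = φ (a * t) := by rw [map_mul, ← hya, mul_assoc]
    rwa [hat, map_zero, mul_eq_zero, or_iff_left hst] at this
  · have : z * (φ s * φ t) = φ (b * s) := by rw [map_mul, ← hzb]; ring
    rwa [hbs, map_zero, mul_eq_zero, or_iff_left hst] at this

theorem existsUnique_add_mul_of_mem_locB {ι : B}
    (hdecomp : ∀ b : B, ∃! p : A × A, b = p.1 + ι * p.2) (hSA : (S : Set B) ⊆ A)
    (hS0 : (0 : B) ∉ S) {x : FractionRing B} (hx : x ∈ locB B S) :
    ∃! p : FractionRing B × FractionRing B, (p.1 ∈ locA B A S ∧ p.2 ∈ locA B A S) ∧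
      x = p.1 + algebraMap B (FractionRing B) ι * p.2 := by
  set φ := algebraMap B (FractionRing B)
  refine existsUnique_of_exists_of_unique ?_ ?_
  · obtain ⟨f, s, hs, hfs⟩ := (mem_locB_iff hS0).mp hx
    obtain ⟨⟨a, b⟩, hab, -⟩ := hdecomp f
    have hs0 := algebraMap_ne_zero_of_mem hS0 hs
    have hdiv : ∀ c ∈ A, φ c * (φ s)⁻¹ ∈ locA B A S := fun c hc =>
      (mem_locA_iff hSA hS0).mpr ⟨c, hc, s, hs, inv_mul_cancel_right₀ hs0 _⟩
    refine ⟨(φ a * (φ s)⁻¹, φ b * (φ s)⁻¹), ⟨hdiv a a.2, hdiv b b.2⟩, ?_⟩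
    rw [← eq_mul_inv_iff_mul_eq₀ hs0] at hfs
    rw [hfs, hab, map_add, map_mul]
    ring
  · rintro ⟨y₁, z₁⟩ ⟨y₂, z₂⟩ ⟨⟨hy₁, hz₁⟩, hx₁⟩ ⟨⟨hy₂, hz₂⟩, hx₂⟩
    have h : (y₁ - y₂) + φ ι * (z₁ - z₂) = 0 := by linear_combination hx₂ - hx₁
    obtain ⟨hy, hz⟩ := eq_zero_of_add_mul_eq_zero_of_mem_locA hdecomp hSA hS0
      (sub_mem hy₁ hy₂) (sub_mem hz₁ hz₂) h
    exact Prod.ext (sub_eq_zero.mp hy) (sub_eq_zero.mp hz)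

end Localization

section PolarGroup

variable {B : Type} [CommRing B] [IsDomain B] {A : Subring B} {S : Submonoid B}

lemma polarN_le_polarNLoc : polarN B A ≤ polarNLoc B A S := by
  rw [polarN, Subgroup.closure_le]
  rintro u (⟨b, hb⟩ | ⟨a, ha⟩)
  · have hinv : ((u⁻¹ : (FractionRing B)ˣ) : FractionRing B) =
        algebraMap B (FractionRing B) ↑b⁻¹ :=
      Units.inv_eq_of_mul_eq_one_right (by rw [hb, ← map_mul, Units.mul_inv, map_one])
    refine Subgroup.subset_closure (Or.inl ⟨?_, ?_⟩)
    · exact hb ▸ Subring.subset_closure (Or.inl ⟨b, rfl⟩)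
    · exact hinv ▸ Subring.subset_closure (Or.inl ⟨_, rfl⟩)
  · exact Subgroup.subset_closure (Or.inr (ha ▸ Subring.subset_closure (Or.inl ⟨a, a.2, rfl⟩)))

variable (B A S) in
noncomputable def polarMap :
    (FractionRing B)ˣ ⧸ polarN B A →* (FractionRing B)ˣ ⧸ polarNLoc B A S :=
  QuotientGroup.map _ _ (MonoidHom.id _) (polarN_le_polarNLoc.trans (Subgroup.comap_id _).ge)

lemma polarMap_surjective : Function.Surjective (polarMap B A S) :=
  QuotientGroup.map_surjective_of_surjective _ _ _ QuotientGroup.mk_surjective _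

lemma polarCls_eq_one_of_mem {a : B} (ha : a ∈ A) (ha0 : a ≠ 0) : polarCls B A a ha0 = 1 :=
  (QuotientGroup.eq_one_iff _).mpr (Subgroup.subset_closure (Or.inr ⟨⟨a, ha⟩, rfl⟩))

lemma mk_eq_polarCls_of_mul_eq {u : (FractionRing B)ˣ} {f s : B} (hs : s ∈ A) (hf : f ≠ 0)
    (h : (u : FractionRing B) * algebraMap B (FractionRing B) s =
      algebraMap B (FractionRing B) f) :
    (u : (FractionRing B)ˣ ⧸ polarN B A) = polarCls B A f hf := by
  rw [polarCls, QuotientGroup.eq]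
  refine Subgroup.subset_closure (Or.inr ⟨⟨s, hs⟩, ?_⟩)
  rw [Units.val_mul, Units.val_mk0, ← h, Units.inv_mul_cancel_left]

lemma mem_locB_inv_of_dvd (hS0 : (0 : B) ∉ S) {f s : B} (hs : s ∈ S) (hfs : f ∣ s) :
    (algebraMap B (FractionRing B) f)⁻¹ ∈ locB B S := by
  obtain ⟨g, rfl⟩ := hfs
  have hf : algebraMap B (FractionRing B) f ≠ 0 := by
    rw [Ne, IsFractionRing.to_map_eq_zero_iff]
    rintro rfl
    exact hS0 (by simpa using hs)
  exact (mem_locB_iff hS0).mpr ⟨g, f * g, hs, by rw [map_mul, inv_mul_cancel_left₀ hf]⟩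

theorem ker_polarMap (hSA : (S : Set B) ⊆ A) (hS0 : (0 : B) ∉ S) :
    (polarMap B A S).ker = Subgroup.closure
      {x | ∃ (f : B) (hf : f ≠ 0), (∃ s ∈ S, f ∣ s) ∧ x = polarCls B A f hf} := by
  rw [polarMap, QuotientGroup.ker_map, Subgroup.comap_id, polarNLoc, MonoidHom.map_closure]
  apply le_antisymm
  · rw [Subgroup.closure_le]
    rintro _ ⟨u, hu, rfl⟩
    have hf0 : ∀ {s f : B}, s ∈ S →
        (u : FractionRing B) * algebraMap B (FractionRing B) s = algebraMap B (FractionRing B) f →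
        f ≠ 0 := by
      rintro s f hs h rfl
      simp [algebraMap_ne_zero_of_mem hS0 hs] at h
    rcases hu with ⟨hu, hu_inv⟩ | hu
    · obtain ⟨f, s, hs, hf⟩ := (mem_locB_iff hS0).mp hu
      obtain ⟨g, t, ht, hg⟩ := (mem_locB_iff hS0).mp hu_inv
      have hfg : f * g = s * t := by
        apply IsFractionRing.injective B (FractionRing B)
        rw [map_mul, map_mul, ← hf, ← hg]
        linear_combination (algebraMap B (FractionRing B) s * algebraMap B (FractionRing B) t) *
          u.mul_inv
      rw [QuotientGroup.mk'_apply, mk_eq_polarCls_of_mul_eq (hSA hs) (hf0 hs hf) hf]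
      exact Subgroup.subset_closure ⟨f, _, ⟨s * t, S.mul_mem hs ht, g, hfg.symm⟩, rfl⟩
    · obtain ⟨a, ha, s, hs, hu⟩ := (mem_locA_iff hSA hS0).mp hu
      rw [SetLike.mem_coe, QuotientGroup.mk'_apply,
        mk_eq_polarCls_of_mul_eq (hSA hs) (hf0 hs hu) hu, polarCls_eq_one_of_mem ha]
      exact one_mem _
  · apply Subgroup.closure_mono
    rintro _ ⟨f, hf, ⟨s, hs, hfs⟩, rfl⟩
    refine ⟨_, Or.inl ⟨Subring.subset_closure (Or.inl ⟨f, rfl⟩), ?_⟩, rfl⟩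
    rw [Units.val_inv_eq_inv_val, Units.val_mk0]
    exact mem_locB_inv_of_dvd hS0 hs hfs

end PolarGroup

theorem polarGroup_localization_general (B : Type) [CommRing B] [IsDomain B] [Algebra ℂ B]
    (A : Subring B)
    (hdecomp : ∀ b : B, ∃! p : ↥A × ↥A,
      b = (p.1 : B) + algebraMap ℂ B Complex.I * (p.2 : B))
    (S : Submonoid B) (hSA : (S : Set B) ⊆ A) (hS0 : (0 : B) ∉ S) :
    (∀ x ∈ locB B S, ∃! p : FractionRing B × FractionRing B,
      (p.1 ∈ locA B A S ∧ p.2 ∈ locA B A S) ∧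
      x = p.1 + algebraMap B (FractionRing B) (algebraMap ℂ B Complex.I) * p.2) ∧
    ∃ π : ((FractionRing B)ˣ ⧸ polarN B A) →* ((FractionRing B)ˣ ⧸ polarNLoc B A S),
      (∀ (f : B) (hf : f ≠ 0), π (polarCls B A f hf) = polarClsLoc B A S f hf) ∧
      Function.Surjective π ∧
      π.ker = Subgroup.closure
        {x | ∃ (f : B) (hf : f ≠ 0), (∃ s ∈ S, f ∣ s) ∧ x = polarCls B A f hf} :=
  ⟨fun _ hx => existsUnique_add_mul_of_mem_locB hdecomp hSA hS0 hx, polarMap B A S,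
    fun _ _ => rfl, polarMap_surjective, ker_polarMap hSA hS0⟩

/-- Let `A` be a Noetherian integral `ℝ`-domain in which `ℝ` is
algebraically closed and `B = ℂ ⊗ℝ A` an integral domain (so `B = A ⊕ iA`).
Let `S ⊆ A∖{0}` be multiplicatively closed and `Ŝ = {f ∈ B : f divides some s ∈ S}`.
Then `S⁻¹B = ℂ ⊗ℝ S⁻¹A` (i.e. `S⁻¹B = S⁻¹A ⊕ i·S⁻¹A`), and the natural map
`π : Π(A) → Π(S⁻¹A)`, `[f]_A ↦ [f]_{S⁻¹A}`, is a surjective group homomorphism whose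
kernel is the subgroup `⟨Ŝ⟩_A` generated by the classes of elements of `Ŝ`;
hence `Π(S⁻¹A) ≅ Π(A)/⟨Ŝ⟩_A`. -/
theorem polarGroup_localization (B : Type) [CommRing B] [IsDomain B] [Algebra ℂ B]
    [Algebra ℝ B] [IsScalarTower ℝ ℂ B] (A : Subring B)
    (hRmem : ∀ r : ℝ, algebraMap ℝ B r ∈ A)
    (hNoeth : IsNoetherianRing ↥A)
    (halgclosed : ∀ a ∈ A, IsAlgebraic ℝ a → ∃ r : ℝ, a = algebraMap ℝ B r)
    (hdecomp : ∀ b : B, ∃! p : ↥A × ↥A,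
      b = (p.1 : B) + algebraMap ℂ B Complex.I * (p.2 : B))
    (S : Submonoid B) (hSA : (S : Set B) ⊆ A) (hS0 : (0 : B) ∉ S) :
    (∀ x ∈ locB B S, ∃! p : FractionRing B × FractionRing B,
      (p.1 ∈ locA B A S ∧ p.2 ∈ locA B A S) ∧
      x = p.1 + algebraMap B (FractionRing B) (algebraMap ℂ B Complex.I) * p.2) ∧
    ∃ π : ((FractionRing B)ˣ ⧸ polarN B A) →* ((FractionRing B)ˣ ⧸ polarNLoc B A S),
      (∀ (f : B) (hf : f ≠ 0), π (polarCls B A f hf) = polarClsLoc B A S f hf) ∧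
      Function.Surjective π ∧
      π.ker = Subgroup.closure
        {x | ∃ (f : B) (hf : f ≠ 0), (∃ s ∈ S, f ∣ s) ∧ x = polarCls B A f hf} :=
  polarGroup_localization_general B A hdecomp S hSA hS0
end

section
/- Assume A is a unique factorization domain. If f ∈ Δ(B), then fⁿ ∈ Δ(B) for every integer n ≥ 0. -/
namespace Subring

variable {B : Type*} [CommRing B] {A : Subring B} {j : B}

theorem coe_dvd_add_mul_iff (hdecomp : ∀ b : B, ∃! p : A × A, b = p.1 + j * p.2)
    {r : A} (a c : A) : (r : B) ∣ a + j * c ↔ r ∣ a ∧ r ∣ c := by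
  constructor
  · rintro ⟨s, hs⟩
    obtain ⟨⟨a', c'⟩, rfl, -⟩ := hdecomp s
    obtain ⟨_, _, huniq⟩ := hdecomp (a + j * c)
    have hcomp : ((a, c) : A × A) = (r * a', r * c') :=
      (huniq (a, c) rfl).trans (huniq _ (by rw [hs]; push_cast; ring)).symm
    simp only [Prod.mk.injEq] at hcomp
    exact ⟨⟨a', hcomp.1⟩, ⟨c', hcomp.2⟩⟩
  · rintro ⟨ha, hc⟩
    exact dvd_add (map_dvd A.subtype ha) ((map_dvd A.subtype hc).mul_left j)

theorem isUnit_of_isUnit_coe (hdecomp : ∀ b : B, ∃! p : A × A, b = p.1 + j * p.2)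
    {r : A} (hr : IsUnit (r : B)) : IsUnit r := by
  have hr1 : (r : B) ∣ (1 : A) + j * (0 : A) := by simpa using hr.dvd
  exact isUnit_of_dvd_one ((coe_dvd_add_mul_iff hdecomp 1 0).mp hr1).1

theorem isRadical_coe_of_prime (hdecomp : ∀ b : B, ∃! p : A × A, b = p.1 + j * p.2)
    (hj : j ^ 2 = -1) (h2 : IsUnit (2 : A)) {p : A} (hp : Prime p) : IsRadical (p : B) := by
  refine (isRadical_iff_pow_one_lt 2 one_lt_two).mpr fun x hx => ?_
  obtain ⟨⟨a, c⟩, rfl, -⟩ := hdecomp x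
  have hsq : ((a : B) + j * c) ^ 2 = ((a ^ 2 - c ^ 2 : A) : B) + j * ((2 * (a * c) : A) : B) := by
    push_cast [show ((2 : A) : B) = 2 from rfl]
    linear_combination (c : B) ^ 2 * hj
  rw [hsq, coe_dvd_add_mul_iff hdecomp] at hx
  obtain ⟨hdiff, hprod⟩ := hx
  have hac : p ∣ a ∨ p ∣ c := hp.dvd_or_dvd (h2.dvd_mul_left.mp hprod)
  rw [coe_dvd_add_mul_iff hdecomp]
  rcases hac with ha | hc
  · have hc2 : p ∣ c ^ 2 := by
      simpa using dvd_sub (dvd_pow ha two_ne_zero) hdiff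
    exact ⟨ha, hp.dvd_of_dvd_pow hc2⟩
  · have ha2 : p ∣ a ^ 2 := by
      simpa using dvd_add hdiff (dvd_pow hc two_ne_zero)
    exact ⟨hp.dvd_of_dvd_pow ha2, hc⟩

end Subring

theorem pow_mem_Delta_general (B : Type) [CommRing B] [IsDomain B] [Algebra ℂ B]
    (A : Subring B)
    (hdecomp : ∀ b : B, ∃! p : ↥A × ↥A,
      b = (p.1 : B) + algebraMap ℂ B Complex.I * (p.2 : B))
    [UniqueFactorizationMonoid ↥A]
    (f : B) (hf : Delta A f) (n : ℕ) :
    Delta A (f ^ n) := by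
  have hi : algebraMap ℂ B Complex.I ^ 2 = -1 := by
    rw [← map_pow, Complex.I_sq, map_neg, map_one]
  have h2 : IsUnit (2 : A) := Subring.isUnit_of_isUnit_coe hdecomp
    (by rw [← map_ofNat (algebraMap ℂ B) 2]; exact (isUnit_of_invertible 2).map _ : IsUnit (2 : B))
  refine ⟨pow_ne_zero n hf.1, fun r hr0 hrf => by_contra fun hru => ?_⟩
  obtain ⟨p, hp_irr, hpr⟩ :=
    WfDvdMonoid.exists_irreducible_factor hru (fun h => hr0 (by rw [h, ZeroMemClass.coe_zero]))
  have hp : Prime p := UniqueFactorizationMonoid.irreducible_iff_prime.mp hp_irr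
  have hpf : (p : B) ∣ f :=
    Subring.isRadical_coe_of_prime hdecomp hi h2 hp n f ((map_dvd A.subtype hpr).trans hrf)
  exact hp.not_isUnit (hf.2 p (by exact_mod_cast hp.ne_zero) hpf)

/-- Let `A` be a Noetherian integral `ℝ`-domain in which `ℝ` is
algebraically closed and `B = ℂ ⊗ℝ A` an integral domain (so `B = A ⊕ iA`), and
assume `A` is a UFD.  If `f ∈ Δ(B)`, then `fⁿ ∈ Δ(B)` for every integer `n ≥ 0`. -/
theorem pow_mem_Delta (B : Type) [CommRing B] [IsDomain B] [Algebra ℂ B]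
    [Algebra ℝ B] [IsScalarTower ℝ ℂ B] (A : Subring B)
    (hRmem : ∀ r : ℝ, algebraMap ℝ B r ∈ A)
    (hNoeth : IsNoetherianRing ↥A)
    (halgclosed : ∀ a ∈ A, IsAlgebraic ℝ a → ∃ r : ℝ, a = algebraMap ℝ B r)
    (hdecomp : ∀ b : B, ∃! p : ↥A × ↥A,
      b = (p.1 : B) + algebraMap ℂ B Complex.I * (p.2 : B))
    [UniqueFactorizationMonoid ↥A]
    (f : B) (hf : Delta A f) (n : ℕ) :
    Delta A (f ^ n) :=
  pow_mem_Delta_general B A hdecomp f hf n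
end

section
/- Assume A is a unique factorization domain. Let f, g ∈ Δ(B) and let fg = r·h be a polar factorization, with r ∈ A nonzero and h ∈ Δ(B). Then for every prime element p ∈ A dividing r, both f·f̄ and g·ḡ (which lie in A) belong to the ideal pA. -/
/-- Let `A` be a Noetherian integral `ℝ`-domain in which `ℝ` is
algebraically closed, `B = ℂ ⊗ℝ A` an integral domain (so `B = A ⊕ iA`), and `σ`
the conjugation of `B`.  Assume `A` is a UFD.  Let `f, g ∈ Δ(B)` and let
`fg = r·h` be a polar factorization (`0 ≠ r ∈ A`, `h ∈ Δ(B)`).  Then for every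
prime `p ∈ A` dividing `r`, both `f·f̄` and `g·ḡ` lie in `pA`. -/
theorem polar_factorization_prime_divides (B : Type) [CommRing B] [IsDomain B]
    [Algebra ℂ B] [Algebra ℝ B] [IsScalarTower ℝ ℂ B] (A : Subring B)
    (hRmem : ∀ r : ℝ, algebraMap ℝ B r ∈ A)
    (hNoeth : IsNoetherianRing ↥A)
    (halgclosed : ∀ a ∈ A, IsAlgebraic ℝ a → ∃ r : ℝ, a = algebraMap ℝ B r)
    (hdecomp : ∀ b : B, ∃! p : ↥A × ↥A,
      b = (p.1 : B) + algebraMap ℂ B Complex.I * (p.2 : B))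
    [UniqueFactorizationMonoid ↥A]
    (σ : B →+* B)
    (hσfix : ∀ a ∈ A, σ a = a)
    (hσI : σ (algebraMap ℂ B Complex.I) = -algebraMap ℂ B Complex.I)
    (f g : B) (hf : Delta A f) (hg : Delta A g)
    (r : ↥A) (h : B) (hr : (r : B) ≠ 0) (hh : Delta A h)
    (hfact : f * g = (r : B) * h)
    (p : ↥A) (hp : Prime p) (hpr : p ∣ r) :
    (∃ a : ↥A, f * σ f = (p : B) * (a : B)) ∧
    (∃ a : ↥A, g * σ g = (p : B) * (a : B)) := by

  set I : B := algebraMap ℂ B Complex.I with hIdef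
  have hI2 : I * I = -1 := by
    rw [hIdef, ← map_mul, Complex.I_mul_I, map_neg, map_one]
  obtain ⟨⟨f1, f2⟩, hfd, -⟩ := hdecomp f
  obtain ⟨⟨g1, g2⟩, hgd, -⟩ := hdecomp g
  dsimp only at hfd hgd
  have uniq : ∀ x y x' y' : ↥A, (x:B) + I * y = (x':B) + I * y' → x = x' ∧ y = y' := by
    intro x y x' y' hxy
    obtain ⟨q, -, hq⟩ := hdecomp ((x:B) + I * y)
    have h1 := hq (x, y) rfl
    have h2 := hq (x', y') hxy
    exact Prod.mk.inj (h1.trans h2.symm)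
  have key : ∀ x y : ↥A, (p:B) ∣ ((x:B) + I * y) → p ∣ x ∧ p ∣ y := by
    rintro x y ⟨b, hb⟩
    obtain ⟨⟨b1, b2⟩, hbd, -⟩ := hdecomp b
    dsimp only at hbd
    have hx : (x:B) + I * y = ((p*b1 : ↥A):B) + I * ((p*b2 : ↥A):B) := by
      push_cast
      rw [hb, hbd]; ring
    obtain ⟨hx1, hx2⟩ := uniq _ _ _ _ hx
    exact ⟨⟨b1, hx1⟩, ⟨b2, hx2⟩⟩
  have hpB0 : (p:B) ≠ 0 := by
    intro h0
    exact hp.ne_zero (by exact_mod_cast h0)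
  have hfg : f * g = ((f1*g1 - f2*g2 : ↥A):B) + I * ((f1*g2 + f2*g1 : ↥A):B) := by
    push_cast
    rw [hfd, hgd]
    linear_combination ((f2:B) * (g2:B)) * hI2
  obtain ⟨s, hs⟩ := hpr
  have hdvdfg : (p:B) ∣ ((f1*g1 - f2*g2 : ↥A):B) + I * ((f1*g2 + f2*g1 : ↥A):B) := by
    rw [← hfg, hfact, hs]
    exact ⟨(s:B) * h, by push_cast; ring⟩
  obtain ⟨hu, hv⟩ := key _ _ hdvdfg
  have e1 : (f1^2+f2^2)*g1 = f1*(f1*g1-f2*g2) + f2*(f1*g2+f2*g1) := by ring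
  have e2 : (f1^2+f2^2)*g2 = f1*(f1*g2+f2*g1) - f2*(f1*g1-f2*g2) := by ring
  have e3 : (g1^2+g2^2)*f1 = g1*(f1*g1-f2*g2) + g2*(f1*g2+f2*g1) := by ring
  have e4 : (g1^2+g2^2)*f2 = g1*(f1*g2+f2*g1) - g2*(f1*g1-f2*g2) := by ring
  have h1 : p ∣ (f1^2+f2^2)*g1 := e1 ▸ dvd_add (hu.mul_left f1) (hv.mul_left f2)
  have h2 : p ∣ (f1^2+f2^2)*g2 := e2 ▸ dvd_sub (hv.mul_left f1) (hu.mul_left f2)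
  have h3 : p ∣ (g1^2+g2^2)*f1 := e3 ▸ dvd_add (hu.mul_left g1) (hv.mul_left g2)
  have h4 : p ∣ (g1^2+g2^2)*f2 := e4 ▸ dvd_sub (hv.mul_left g1) (hu.mul_left g2)
  have hσf : σ f = (f1:B) - I * f2 := by
    rw [hfd, map_add, map_mul, hσI, hσfix _ f1.2, hσfix _ f2.2]; ring
  have hσg : σ g = (g1:B) - I * g2 := by
    rw [hgd, map_add, map_mul, hσI, hσfix _ g1.2, hσfix _ g2.2]; ring
  have hffbar : f * σ f = ((f1^2 + f2^2 : ↥A) : B) := by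
    rw [hσf, hfd]
    push_cast
    linear_combination (-((f2:B)^2)) * hI2
  have hggbar : g * σ g = ((g1^2 + g2^2 : ↥A) : B) := by
    rw [hσg, hgd]
    push_cast
    linear_combination (-((g2:B)^2)) * hI2
  have claimF : p ∣ (f1^2 + f2^2) := by
    by_contra hF
    have hd1 : p ∣ g1 := ((hp.dvd_or_dvd h1).resolve_left hF)
    have hd2 : p ∣ g2 := ((hp.dvd_or_dvd h2).resolve_left hF)
    obtain ⟨c1, hc1⟩ := hd1
    obtain ⟨c2, hc2⟩ := hd2
    have : (p:B) ∣ g := ⟨(c1:B) + I * c2, by rw [hgd, hc1, hc2]; push_cast; ring⟩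
    exact hp.not_unit (hg.2 p hpB0 this)
  have claimG : p ∣ (g1^2 + g2^2) := by
    by_contra hG
    have hd1 : p ∣ f1 := ((hp.dvd_or_dvd h3).resolve_left hG)
    have hd2 : p ∣ f2 := ((hp.dvd_or_dvd h4).resolve_left hG)
    obtain ⟨c1, hc1⟩ := hd1
    obtain ⟨c2, hc2⟩ := hd2
    have : (p:B) ∣ f := ⟨(c1:B) + I * c2, by rw [hfd, hc1, hc2]; push_cast; ring⟩
    exact hp.not_unit (hf.2 p hpB0 this)
  obtain ⟨a1, ha1⟩ := claimF
  obtain ⟨a2, ha2⟩ := claimG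
  refine ⟨⟨a1, ?_⟩, ⟨a2, ?_⟩⟩
  · rw [hffbar, ha1]; push_cast; ring
  · rw [hggbar, ha2]; push_cast; ring
end

section
/- Assume A is a unique factorization domain. Let f, g ∈ Δ(B). If f·f̄ and g·ḡ (which lie in A) satisfy gcd(f·f̄, g·ḡ) = 1 in A (every common divisor in A is a unit), then fg ∈ Δ(B). -/
/-- Let `A` be a Noetherian integral `ℝ`-domain in which `ℝ` is
algebraically closed, `B = ℂ ⊗ℝ A` an integral domain (so `B = A ⊕ iA`), and `σ`
the conjugation of `B`.  Assume `A` is a UFD.  Let `f, g ∈ Δ(B)`.  If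
`gcd(f·f̄, g·ḡ) = 1` in `A` (every common divisor in `A` is a unit), then
`fg ∈ Δ(B)`. -/
theorem mul_mem_Delta_of_coprime_norms (B : Type) [CommRing B] [IsDomain B]
    [Algebra ℂ B] [Algebra ℝ B] [IsScalarTower ℝ ℂ B] (A : Subring B)
    (hRmem : ∀ r : ℝ, algebraMap ℝ B r ∈ A)
    (hNoeth : IsNoetherianRing ↥A)
    (halgclosed : ∀ a ∈ A, IsAlgebraic ℝ a → ∃ r : ℝ, a = algebraMap ℝ B r)
    (hdecomp : ∀ b : B, ∃! p : ↥A × ↥A,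
      b = (p.1 : B) + algebraMap ℂ B Complex.I * (p.2 : B))
    [UniqueFactorizationMonoid ↥A]
    (σ : B →+* B)
    (hσfix : ∀ a ∈ A, σ a = a)
    (hσI : σ (algebraMap ℂ B Complex.I) = -algebraMap ℂ B Complex.I)
    (f g : B) (hf : Delta A f) (hg : Delta A g)
    (hgcd : ∀ d : ↥A, (∃ c : ↥A, f * σ f = (d : B) * (c : B)) →
      (∃ c : ↥A, g * σ g = (d : B) * (c : B)) → IsUnit d) :
    Delta A (f * g) := by
  obtain ⟨hf0, hfdvd⟩ := hf
  obtain ⟨hg0, hgdvd⟩ := hg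
  set i : B := algebraMap ℂ B Complex.I with hi
  have h2B : (2 : B) ≠ 0 := by
    have hinj : Function.Injective (algebraMap ℂ B) := (algebraMap ℂ B).injective
    intro h
    have : (2 : ℂ) = 0 := hinj (by rw [map_ofNat, map_zero]; exact h)
    norm_num at this
  have hσform : ∀ (a₁ a₂ : ↥A), σ ((a₁ : B) + i * a₂) = (a₁ : B) + i * ((-a₂ : ↥A) : B) := by
    intro a₁ a₂
    rw [map_add, map_mul, hσfix _ a₁.2, hσfix _ a₂.2, hσI]
    push_cast
    ring
  have hfix : ∀ b : B, σ b = b → ∃ a : ↥A, (a : B) = b := by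
    intro b hb
    obtain ⟨⟨a₁, a₂⟩, hp, hu⟩ := hdecomp b
    have h1 : ((a₁, -a₂) : ↥A × ↥A) = (a₁, a₂) := by
      apply hu
      simp only
      rw [← hσform a₁ a₂, ← hp, hb]
    have ha2 : -a₂ = a₂ := congrArg Prod.snd h1
    have ha2' : (a₂ : B) = 0 := by
      have h5 : (2 : B) * (a₂ : B) = 0 := by
        have h6 := congrArg (fun x : ↥A => (x : B)) ha2
        push_cast at h6
        linear_combination -h6
      rcases mul_eq_zero.mp h5 with h | h
      · exact absurd h h2B
      · exact h
    refine ⟨a₁, ?_⟩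
    rw [hp, ha2']
    ring
  have hσσ : ∀ b : B, σ (σ b) = b := by
    intro b
    obtain ⟨⟨a₁, a₂⟩, hp, -⟩ := hdecomp b
    rw [hp, hσform]
    rw [show ((a₁ : B) + i * ((-a₂ : ↥A) : B)) = (a₁ : B) + i * (-(a₂ : B)) by push_cast; ring]
    rw [show (a₁ : B) + i * (-(a₂ : B)) = (a₁ : B) + i * (((-a₂ : ↥A)) : B) by push_cast; ring,
      hσform]
    push_cast
    ring
  have hkey : ∀ (p n : ↥A) (x : B), Prime p → ¬ (p ∣ n) → (p : B) ∣ x * n → (p : B) ∣ x := by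
    rintro p n x hp hpn ⟨b, hb⟩
    obtain ⟨⟨x₁, x₂⟩, hx, -⟩ := hdecomp x
    obtain ⟨⟨b₁, b₂⟩, hbd, -⟩ := hdecomp b
    obtain ⟨q, -, hq⟩ := hdecomp (x * n)
    have e1 : ((x₁ * n, x₂ * n) : ↥A × ↥A) = q := by
      apply hq; simp only; push_cast; rw [hx]; push_cast; ring
    have e2 : ((p * b₁, p * b₂) : ↥A × ↥A) = q := by
      apply hq; simp only; push_cast; rw [hb, hbd]; push_cast; ring
    have e12 := e1.trans e2.symm
    have e3 : x₁ * n = p * b₁ := congrArg Prod.fst e12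
    have e4 : x₂ * n = p * b₂ := congrArg Prod.snd e12
    have d1 : p ∣ x₁ := (hp.dvd_mul.mp ⟨b₁, e3⟩).resolve_right hpn
    have d2 : p ∣ x₂ := (hp.dvd_mul.mp ⟨b₂, e4⟩).resolve_right hpn
    obtain ⟨c₁, hc₁⟩ := d1
    obtain ⟨c₂, hc₂⟩ := d2
    refine ⟨(c₁ : B) + i * c₂, ?_⟩
    have hc₁' : (x₁ : B) = (p : B) * c₁ := by exact_mod_cast congrArg (fun x : ↥A => (x : B)) hc₁
    have hc₂' : (x₂ : B) = (p : B) * c₂ := by exact_mod_cast congrArg (fun x : ↥A => (x : B)) hc₂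
    rw [hx, hc₁', hc₂']
    ring
  constructor
  · exact mul_ne_zero hf0 hg0
  intro r hr0 hrdvd
  by_contra hru
  have hr0' : r ≠ 0 := fun h => hr0 (by rw [h]; simp)
  obtain ⟨p, hpirr, hpr⟩ := WfDvdMonoid.exists_irreducible_factor hru hr0'
  have hp : Prime p := (UniqueFactorizationMonoid.irreducible_iff_prime).mp hpirr
  have hpB0 : (p : B) ≠ 0 := by
    simpa using fun h => hp.ne_zero (Subtype.ext h)
  -- p divides f*g in B
  have hpfg : (p : B) ∣ f * g := by
    obtain ⟨c, hc⟩ := hpr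
    refine dvd_trans ⟨c, ?_⟩ hrdvd
    exact_mod_cast congrArg (fun x : ↥A => (x : B)) hc
  obtain ⟨h, hh⟩ := hpfg
  -- norms in A
  obtain ⟨nf, hnf⟩ := hfix (f * σ f) (by rw [map_mul, hσσ]; ring)
  obtain ⟨ng, hng⟩ := hfix (g * σ g) (by rw [map_mul, hσσ]; ring)
  obtain ⟨m, hm⟩ := hfix (h * σ h) (by rw [map_mul, hσσ]; ring)
  have hσp : σ (p : B) = p := hσfix _ p.2
  have hBeq : ((nf * ng : ↥A) : B) = ((p * p * m : ↥A) : B) := by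
    push_cast
    rw [hnf, hng, hm]
    have hσfg : σ (f * g) = (p : B) * σ h := by rw [hh, map_mul, hσp]
    have : (f * σ f) * (g * σ g) = (f * g) * σ (f * g) := by rw [map_mul]; ring
    rw [this, hh, map_mul, hσp]
    ring
  have hAeq : nf * ng = p * p * m := Subtype.ext (by exact_mod_cast hBeq)
  have hpnfng : p ∣ nf * ng := ⟨p * m, by rw [hAeq]; ring⟩
  have Hf : p ∣ nf → ∃ c : ↥A, f * σ f = (p : B) * (c : B) := by
    rintro ⟨c, hc⟩
    exact ⟨c, by rw [← hnf]; exact_mod_cast congrArg (fun x : ↥A => (x : B)) hc⟩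
  have Hg : p ∣ ng → ∃ c : ↥A, g * σ g = (p : B) * (c : B) := by
    rintro ⟨c, hc⟩
    exact ⟨c, by rw [← hng]; exact_mod_cast congrArg (fun x : ↥A => (x : B)) hc⟩
  by_cases h1 : p ∣ nf
  · by_cases h2 : p ∣ ng
    · exact hp.not_unit (hgcd p (Hf h1) (Hg h2))
    · -- p ∤ ng : p divides f
      have hfd : (p : B) ∣ f := by
        refine hkey p ng f hp h2 ⟨h * σ g, ?_⟩
        rw [hng, show f * (g * σ g) = (f * g) * σ g by ring, hh]
        ring
      exact hp.not_unit (hfdvd p hpB0 hfd)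
  · have h2 : p ∣ ng := (hp.dvd_mul.mp hpnfng).resolve_left h1
    have hgd : (p : B) ∣ g := by
      refine hkey p nf g hp h1 ⟨h * σ f, ?_⟩
      rw [hnf, show g * (f * σ f) = (f * g) * σ f by ring, hh]
      ring
    exact hp.not_unit (hgdvd p hpB0 hgd)
end

section
/- If A is a unique factorization domain, then the polar group Π(A) is torsion free: if γ ∈ Π(A) satisfies γⁿ = 1 for some integer n ≥ 1, then γ = 1. -/
/-- `B = A ⊕ iA`. -/
def Subring.IsRealForm {B : Type*} [CommRing B] (A : Subring B) (i : B) : Prop :=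
  ∀ b : B, ∃! p : A × A, b = p.1 + i * p.2

namespace Subring.IsRealForm

variable {B : Type*} [CommRing B] {A : Subring B} {i : B}

theorem exists_eq (h : A.IsRealForm i) (b : B) : ∃ x y : A, b = x + i * y :=
  let ⟨p, hp, _⟩ := h b
  ⟨p.1, p.2, hp⟩

theorem eq_of_add_mul_eq (h : A.IsRealForm i) {x y x' y' : A}
    (e : (x : B) + i * y = x' + i * y') : x = x' ∧ y = y' := by
  obtain ⟨_, _, huniq⟩ := h (x + i * y)
  exact Prod.ext_iff.1 ((huniq (x, y) rfl).trans (huniq (x', y') e).symm)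

theorem coe_dvd_add_mul_iff (h : A.IsRealForm i) {a x y : A} :
    (a : B) ∣ x + i * y ↔ a ∣ x ∧ a ∣ y := by
  refine ⟨fun ⟨δ, hδ⟩ => ?_, fun ⟨⟨d, hd⟩, ⟨e, he⟩⟩ => ⟨d + i * e, by simp [hd, he]; ring⟩⟩
  obtain ⟨d, e, rfl⟩ := h.exists_eq δ
  obtain ⟨hx, hy⟩ := h.eq_of_add_mul_eq (x' := a * d) (y' := a * e)
    (by push_cast; rw [hδ]; ring)
  exact ⟨⟨d, hx⟩, ⟨e, hy⟩⟩

theorem coe_dvd_coe_iff (h : A.IsRealForm i) {a b : A} : (a : B) ∣ b ↔ a ∣ b := by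
  simpa using h.coe_dvd_add_mul_iff (a := a) (x := b) (y := 0)

theorem isUnit_of_isUnit_coe (h : A.IsRealForm i) {a : A} (ha : IsUnit (a : B)) : IsUnit a := by
  rw [isUnit_iff_dvd_one] at ha ⊢
  exact h.coe_dvd_coe_iff.1 (by simpa using ha)

theorem mem_of_mul_coe_mem [IsDomain B] (h : A.IsRealForm i) {β : B} {d : A} (hd : d ≠ 0)
    (hβ : β * d ∈ A) : β ∈ A := by
  obtain ⟨x, y, rfl⟩ := h.exists_eq β
  obtain ⟨-, hy⟩ := h.eq_of_add_mul_eq (x := x * d) (y := y * d) (x' := ⟨_, hβ⟩) (y' := 0)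
    (by push_cast; ring)
  obtain rfl : y = 0 := (mul_eq_zero.1 hy).resolve_right hd
  simp

theorem exists_coe_ne_zero_dvd [IsDomain B] (h : A.IsRealForm i) (hi : i * i = -1) {δ : B}
    (hδ : δ ≠ 0) : ∃ a : A, a ≠ 0 ∧ δ ∣ a := by
  obtain ⟨x, y, rfl⟩ := h.exists_eq δ
  have hnorm : (x + i * y) * (x + i * (-y : A)) = ((x * x + y * y : A) : B) := by
    push_cast; linear_combination (-(y : B) * y) * hi
  have hconj : (x : B) + i * (-y : A) ≠ 0 := by
    intro h0
    obtain ⟨rfl, hy⟩ := h.eq_of_add_mul_eq (x' := 0) (y' := 0)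
      (by simpa only [ZeroMemClass.coe_zero, mul_zero, add_zero] using h0)
    exact hδ (by simp [neg_eq_zero.1 hy])
  refine ⟨x * x + y * y, fun h0 => ?_, ⟨_, hnorm.symm⟩⟩
  exact mul_ne_zero hδ hconj (by rw [hnorm, h0, ZeroMemClass.coe_zero])

theorem dvd_of_dvd_sq (h : A.IsRealForm i) (hi : i * i = -1) {p : A} (hp : Prime p)
    (hp2 : ¬ p ∣ 2) {β : B} (hβ : (p : B) ∣ β ^ 2) : (p : B) ∣ β := by
  obtain ⟨x, y, rfl⟩ := h.exists_eq β
  have hsq : (x + i * y) ^ 2 = ((x * x - y * y : A) : B) + i * (x * y + x * y : A) := by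
    push_cast; linear_combination ((y : B) * y) * hi
  rw [hsq, h.coe_dvd_add_mul_iff] at hβ
  rw [h.coe_dvd_add_mul_iff]
  obtain ⟨hdiff, hprod⟩ := hβ
  have hxy : p ∣ x * y := by
    rw [← two_mul] at hprod
    exact (hp.dvd_or_dvd hprod).resolve_left hp2
  -- `p` divides one of `x`, `y`, hence the square of the other through `x² - y²`.
  rcases hp.dvd_or_dvd hxy with hx | hy
  · have : p ∣ y * y := by simpa using (dvd_mul_of_dvd_left hx x).sub hdiff
    exact ⟨hx, hp.dvd_of_dvd_pow (n := 2) (by rwa [sq])⟩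
  · have : p ∣ x * x := by simpa using hdiff.add (dvd_mul_of_dvd_left hy y)
    exact ⟨hp.dvd_of_dvd_pow (n := 2) (by rwa [sq]), hy⟩

theorem isRadical_coe (h : A.IsRealForm i) (hi : i * i = -1) {p : A} (hp : Prime p)
    (hp2 : ¬ p ∣ 2) : IsRadical (p : B) :=
  (isRadical_iff_pow_one_lt 2 one_lt_two).2 fun _ => h.dvd_of_dvd_sq hi hp hp2

theorem exists_associated_coe_of_associated_pow [IsDomain B] [UniqueFactorizationMonoid A]
    (h : A.IsRealForm i) (hi : i * i = -1) (h2 : IsUnit (2 : A)) {n : ℕ} (hn : n ≠ 0) (c : A) :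
    ∀ β : B, Associated (β ^ n) (c : B) → ∃ a : A, Associated β (a : B) := by
  induction c using (wellFounded_dvdNotUnit (α := A)).induction with | _ c ih
  intro β hβ
  by_cases hc0 : c = 0
  · subst hc0
    refine ⟨0, ?_⟩
    rw [ZeroMemClass.coe_zero, associated_zero_iff_eq_zero] at hβ ⊢
    exact pow_eq_zero_iff hn |>.1 hβ
  by_cases hcu : IsUnit c
  · refine ⟨1, ?_⟩
    have : IsUnit (β ^ n) := hβ.isUnit_iff.2 (hcu.map A.subtype)
    simpa using associated_one_iff_isUnit.2 ((isUnit_pow_iff hn).1 this)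
  obtain ⟨p, hp_irr, hpc⟩ := WfDvdMonoid.exists_irreducible_factor hcu hc0
  have hp := UniqueFactorizationMonoid.irreducible_iff_prime.1 hp_irr
  have hp2 : ¬ p ∣ 2 := fun hd => hp.not_isUnit (isUnit_of_dvd_unit hd h2)
  obtain ⟨β₁, rfl⟩ : (p : B) ∣ β := h.isRadical_coe hi hp hp2 n β <|
    hβ.dvd_iff_dvd_right.2 (by exact_mod_cast map_dvd A.subtype hpc)
  obtain ⟨c₁, rfl⟩ : p ^ n ∣ c := h.coe_dvd_coe_iff.1 <| by
    rw [← hβ.dvd_iff_dvd_right, mul_pow]; exact_mod_cast dvd_mul_right _ _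
  have hpn : ((p ^ n : A) : B) ≠ 0 := by exact_mod_cast pow_ne_zero n hp.ne_zero
  have hβ₁ : Associated (β₁ ^ n) (c₁ : B) :=
    Associated.of_mul_left (by push_cast at hβ ⊢; rwa [mul_pow] at hβ) (Associated.refl _) hpn
  have hdvd : DvdNotUnit c₁ (p ^ n * c₁) :=
    ⟨right_ne_zero_of_mul hc0, p ^ n, fun hu => hp.not_isUnit (isUnit_of_dvd_unit
      (dvd_pow_self p hn) hu), mul_comm _ _⟩
  obtain ⟨a, ha⟩ := ih c₁ hdvd β₁ hβ₁
  exact ⟨p * a, by push_cast; exact ha.mul_left _⟩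

theorem exists_eq_div [IsDomain B] (h : A.IsRealForm i) (hi : i * i = -1)
    (u : FractionRing B) : ∃ (β : B) (a : A), a ≠ 0 ∧
      u = algebraMap B (FractionRing B) β / algebraMap B (FractionRing B) a := by
  obtain ⟨β, δ, hδ, rfl⟩ := IsFractionRing.div_surjective (A := B) u
  obtain ⟨a, ha, δ', hδ'⟩ := h.exists_coe_ne_zero_dvd hi (nonZeroDivisors.ne_zero hδ)
  have hδ'0 : algebraMap B (FractionRing B) δ' ≠ 0 := by
    simpa using right_ne_zero_of_mul (hδ' ▸ (by exact_mod_cast ha : (a : B) ≠ 0))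
  exact ⟨β * δ', a, ha, by rw [hδ', map_mul, map_mul, mul_div_mul_right _ _ hδ'0]⟩

end Subring.IsRealForm

section polarN

variable {B : Type} [CommRing B] {A : Subring B}

local notation "ι" => algebraMap B (FractionRing B)

theorem algebraMap_coe_ne_zero {a : A} (ha : a ≠ 0) : ι a ≠ 0 := by
  simpa using ha

theorem mem_polarN_iff [IsDomain B] {u : (FractionRing B)ˣ} :
    u ∈ polarN B A ↔
      ∃ (b : Bˣ) (a₁ a₂ : A), a₁ ≠ 0 ∧ a₂ ≠ 0 ∧ (u : FractionRing B) = ι b * ι a₁ / ι a₂ := by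
  constructor
  · intro hu
    induction hu using Subgroup.closure_induction with
    | mem x hx =>
      rcases hx with ⟨b, hb⟩ | ⟨a, ha⟩
      · exact ⟨b, 1, 1, one_ne_zero, one_ne_zero, by simp [hb]⟩
      · have ha0 : a ≠ 0 := by rintro rfl; simp at ha
        exact ⟨1, a, 1, ha0, one_ne_zero, by simp [ha]⟩
    | one => exact ⟨1, 1, 1, one_ne_zero, one_ne_zero, by simp⟩
    | mul x y _ _ hx hy =>
      obtain ⟨b, a₁, a₂, h₁, h₂, hx⟩ := hx
      obtain ⟨b', a₁', a₂', h₁', h₂', hy⟩ := hy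
      refine ⟨b * b', a₁ * a₁', a₂ * a₂', mul_ne_zero h₁ h₁', mul_ne_zero h₂ h₂', ?_⟩
      push_cast [Units.val_mul, map_mul, hx, hy]
      ring
    | inv x _ hx =>
      obtain ⟨b, a₁, a₂, h₁, h₂, hx⟩ := hx
      refine ⟨b⁻¹, a₂, a₁, h₂, h₁, ?_⟩
      rw [Units.val_inv_eq_inv_val, hx, inv_div, map_units_inv]
      ring
  · rintro ⟨b, a₁, a₂, h₁, h₂, hu⟩
    have hb : ι b ≠ 0 := by simp
    have hmem : ∀ {a : A} (ha : a ≠ 0),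
        Units.mk0 _ (algebraMap_coe_ne_zero ha) ∈ polarN B A :=
      fun _ => Subgroup.subset_closure (Or.inr ⟨_, rfl⟩)
    have hu' : u = Units.mk0 _ hb * Units.mk0 _ (algebraMap_coe_ne_zero h₁) *
        (Units.mk0 _ (algebraMap_coe_ne_zero h₂))⁻¹ := by
      ext; simp [hu, div_eq_mul_inv]
    rw [hu']
    exact mul_mem (mul_mem (Subgroup.subset_closure (Or.inl ⟨b, rfl⟩)) (hmem h₁))
      (inv_mem (hmem h₂))

theorem Subring.IsRealForm.mem_polarN_of_pow_mem [IsDomain B] [UniqueFactorizationMonoid A]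
    {i : B} (h : A.IsRealForm i) (hi : i * i = -1) (h2 : IsUnit (2 : A)) {n : ℕ} (hn : n ≠ 0)
    {u : (FractionRing B)ˣ} (hu : u ^ n ∈ polarN B A) : u ∈ polarN B A := by
  obtain ⟨b, a₁, a₂, -, h₂, hun⟩ := mem_polarN_iff.1 hu
  obtain ⟨β, a₀, h₀, hβ⟩ := h.exists_eq_div hi u
  have hβn : ((b⁻¹ : Bˣ) : B) * β ^ n * a₂ = ((a₁ * a₀ ^ n : A) : B) := by
    rw [Units.val_pow_eq_pow_val, hβ, div_pow,
      div_eq_div_iff (pow_ne_zero n (algebraMap_coe_ne_zero h₀)) (algebraMap_coe_ne_zero h₂)]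
      at hun
    apply IsFractionRing.injective B (FractionRing B)
    simp only [map_mul, map_pow, map_units_inv, Subring.coe_mul, SubmonoidClass.coe_pow]
    rw [mul_assoc, hun]
    field_simp [show ι b ≠ 0 by simp]
  obtain ⟨c, hc⟩ : ∃ c : A, ((b⁻¹ : Bˣ) : B) * β ^ n = c :=
    ⟨⟨_, h.mem_of_mul_coe_mem h₂ (hβn ▸ Subtype.prop _)⟩, rfl⟩
  obtain ⟨a, v, hv⟩ := h.exists_associated_coe_of_associated_pow hi h2 hn c β
    ⟨b⁻¹, by rw [mul_comm, hc]⟩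
  have ha : a ≠ 0 := by
    rintro rfl
    exact u.ne_zero (by simp_all)
  refine mem_polarN_iff.2 ⟨v⁻¹, a, a₀, ha, h₀, ?_⟩
  rw [hβ, (Units.eq_mul_inv_iff_mul_eq v).2 hv, map_mul, mul_comm (ι a)]

end polarN

theorem polarGroup_torsionFree_of_UFD_general (B : Type) [CommRing B] [IsDomain B]
    [Algebra ℂ B] (A : Subring B)
    (hdecomp : ∀ b : B, ∃! p : ↥A × ↥A,
      b = (p.1 : B) + algebraMap ℂ B Complex.I * (p.2 : B))
    [UniqueFactorizationMonoid ↥A] :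
    ∀ (γ : (FractionRing B)ˣ ⧸ polarN B A) (n : ℕ), 1 ≤ n → γ ^ n = 1 → γ = 1 := by
  have h : A.IsRealForm (algebraMap ℂ B Complex.I) := hdecomp
  have hi : algebraMap ℂ B Complex.I * algebraMap ℂ B Complex.I = -1 := by
    rw [← map_mul, Complex.I_mul_I, map_neg, map_one]
  have h2 : IsUnit (2 : A) := h.isUnit_of_isUnit_coe <| by
    have := (isUnit_of_invertible (2 : ℂ)).map (algebraMap ℂ B)
    rw [map_ofNat] at this
    exact_mod_cast this
  intro γ n hn hγ
  induction γ using QuotientGroup.induction_on with | H u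
  rw [← QuotientGroup.mk_pow, QuotientGroup.eq_one_iff] at hγ
  exact (QuotientGroup.eq_one_iff u).2 (h.mem_polarN_of_pow_mem hi h2 (by omega) hγ)

/-- Let `A` be a Noetherian integral `ℝ`-domain in which `ℝ` is
algebraically closed and `B = ℂ ⊗ℝ A` an integral domain (so `B = A ⊕ iA`).
If `A` is a UFD, then the polar group `Π(A) = L*/(B*·K*)` is torsion free:
if `γⁿ = 1` for some `n ≥ 1`, then `γ = 1`. -/
theorem polarGroup_torsionFree_of_UFD (B : Type) [CommRing B] [IsDomain B]
    [Algebra ℂ B] [Algebra ℝ B] [IsScalarTower ℝ ℂ B] (A : Subring B)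
    (hRmem : ∀ r : ℝ, algebraMap ℝ B r ∈ A)
    (hNoeth : IsNoetherianRing ↥A)
    (halgclosed : ∀ a ∈ A, IsAlgebraic ℝ a → ∃ r : ℝ, a = algebraMap ℝ B r)
    (hdecomp : ∀ b : B, ∃! p : ↥A × ↥A,
      b = (p.1 : B) + algebraMap ℂ B Complex.I * (p.2 : B))
    [UniqueFactorizationMonoid ↥A] :
    ∀ (γ : (FractionRing B)ˣ ⧸ polarN B A) (n : ℕ), 1 ≤ n → γ ^ n = 1 → γ = 1 :=
  polarGroup_torsionFree_of_UFD_general B A hdecomp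
end

section
/- The coordinate ring ℝ[x,y]/(x² + y² − 1) of the real algebraic circle S¹ is not a unique factorization domain. -/
open MvPolynomial

/-- The coordinate ring `ℝ[x,y]/(x² + y² − 1)` of the real algebraic circle `S¹`. -/
abbrev circleRing : Type :=
  MvPolynomial (Fin 2) ℝ ⧸
    Ideal.span {(X 0 : MvPolynomial (Fin 2) ℝ) ^ 2 + (X 1 : MvPolynomial (Fin 2) ℝ) ^ 2 - 1}

/-!
Writing the circle ring as `ℝ[x][y]/(y² − (1 − x²))`, i.e. as a quadratic algebra over `ℝ[x]`,
gives it the norm `N(a + b y) = a² + (x² − 1) b²`, a polynomial of even degree. Since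
`N(x) = x²`, any factorization `x = z w` has `deg N(z) + deg N(w) = 2`, so one factor has norm of
degree `0`, i.e. is a unit: `x` is irreducible. But `x` is not prime, since
`x · x = (1 − y)(1 + y)` while `x` divides neither `1 − y` nor `1 + y` (their `y`-coefficients
`∓1` are not multiples of `x`). A UFD has no irreducible non-prime elements.
-/

open scoped Polynomial
open QuadraticAlgebra

namespace Polynomial

theorem even_natDegree_sq_add_mul_sq {R : Type*} [CommRing R] [LinearOrder R]
    [IsStrictOrderedRing R] {q : R[X]} (hq : 0 < q.leadingCoeff) (hq_even : Even q.natDegree)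
    (a b : R[X]) : Even (a ^ 2 + q * b ^ 2).natDegree := by
  rcases eq_or_ne b 0 with rfl | hb
  · simp
  have ha_even : Even (a ^ 2).natDegree := by rw [natDegree_pow]; exact even_two_mul _
  have hqb_even : Even (q * b ^ 2).natDegree := by
    rw [natDegree_mul (leadingCoeff_ne_zero.1 hq.ne') (pow_ne_zero 2 hb), natDegree_pow]
    exact hq_even.add (even_two_mul _)
  -- both leading coefficients are positive, so no cancellation happens at the top degree
  have hlc : (a ^ 2).leadingCoeff + (q * b ^ 2).leadingCoeff ≠ 0 := by
    have : b.leadingCoeff ≠ 0 := leadingCoeff_ne_zero.2 hb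
    rw [leadingCoeff_pow, leadingCoeff_mul, leadingCoeff_pow]
    positivity
  rcases max_choice (a ^ 2).degree (q * b ^ 2).degree with h | h <;>
    rw [← degree_add_eq_of_leadingCoeff_add_ne_zero hlc] at h <;>
    rwa [natDegree_eq_of_degree_eq h]

theorem isUnit_or_isUnit_of_mul_eq_X_sq {K : Type*} [Field K] {p q : K[X]}
    (h : p * q = X ^ 2) (hp : Even p.natDegree) (hq : Even q.natDegree) :
    IsUnit p ∨ IsUnit q := by
  have hp0 : p ≠ 0 := left_ne_zero_of_mul (h ▸ pow_ne_zero 2 X_ne_zero)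
  have hq0 : q ≠ 0 := right_ne_zero_of_mul (h ▸ pow_ne_zero 2 X_ne_zero)
  have hdeg : p.natDegree + q.natDegree = 2 := by
    rw [← natDegree_mul hp0 hq0, h, natDegree_X_pow]
  obtain ⟨k, hk⟩ := hp
  obtain ⟨l, hl⟩ := hq
  rcases (by omega : p.natDegree = 0 ∨ q.natDegree = 0) with h0 | h0
  · exact .inl (isUnit_iff_degree_eq_zero.2 (by rw [degree_eq_natDegree hp0, h0]; rfl))
  · exact .inr (isUnit_iff_degree_eq_zero.2 (by rw [degree_eq_natDegree hq0, h0]; rfl))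

end Polynomial

/-- `ℝ[x][y]/(y² − (1 − x²))`, with `ω` playing the role of `y`. -/
abbrev circleQuadraticAlgebra : Type := QuadraticAlgebra ℝ[X] (1 - Polynomial.X ^ 2) 0

namespace circleQuadraticAlgebra

open Polynomial

local notation "x̂" => algebraMap ℝ[X] circleQuadraticAlgebra Polynomial.X

theorem omega_sq : (ω : circleQuadraticAlgebra) ^ 2 = 1 - x̂ ^ 2 := by
  simp [sq, omega_mul_omega_eq_algebraMap]

theorem norm_eq (z : circleQuadraticAlgebra) :
    z.norm = z.re ^ 2 + (Polynomial.X ^ 2 - 1) * z.im ^ 2 := by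
  rw [norm_def]
  ring

theorem even_natDegree_norm (z : circleQuadraticAlgebra) : Even z.norm.natDegree := by
  rw [norm_eq]
  refine even_natDegree_sq_add_mul_sq ?_ ⟨1, ?_⟩ _ _
  · rw [leadingCoeff_X_pow_sub_one two_pos]
    exact one_pos
  · rw [← Polynomial.C_1, natDegree_X_pow_sub_C]

theorem irreducible_X : Irreducible x̂ := by
  refine ⟨?_, fun z w hzw => ?_⟩
  · rw [isUnit_iff_norm_isUnit, QuadraticAlgebra.norm_algebraMap, isUnit_pow_iff two_ne_zero]
    exact not_isUnit_X
  · rw [isUnit_iff_norm_isUnit, isUnit_iff_norm_isUnit]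
    refine isUnit_or_isUnit_of_mul_eq_X_sq ?_ (even_natDegree_norm z) (even_natDegree_norm w)
    rw [← map_mul, ← hzw, QuadraticAlgebra.norm_algebraMap]

theorem not_prime_X : ¬ Prime x̂ := by
  intro hx
  have hdvd : x̂ ∣ (1 - ω) * (1 + ω) := ⟨x̂, by linear_combination -omega_sq⟩
  rcases hx.dvd_or_dvd hdvd with h | h <;> simp [algebraMap_dvd_iff, X_dvd_iff] at h

end circleQuadraticAlgebra

namespace circleRing

local notation "x̄" => (Ideal.Quotient.mk _ (X 0) : circleRing)
local notation "ȳ" => (Ideal.Quotient.mk _ (X 1) : circleRing)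

theorem mk_X_one_sq : ȳ ^ 2 = 1 - x̄ ^ 2 := by
  rw [eq_sub_iff_add_eq', ← map_pow, ← map_pow, ← map_add, ← map_one (Ideal.Quotient.mk _),
    Ideal.Quotient.eq]
  exact Ideal.subset_span rfl

noncomputable def toQuadraticAlgebra : circleRing →ₐ[ℝ] circleQuadraticAlgebra :=
  Ideal.Quotient.liftₐ _ (aeval ![algebraMap ℝ[X] _ Polynomial.X, ω]) (by
    intro p hp
    obtain ⟨c, rfl⟩ := Ideal.mem_span_singleton'.1 hp
    simp [circleQuadraticAlgebra.omega_sq])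

theorem toQuadraticAlgebra_mk (p : MvPolynomial (Fin 2) ℝ) :
    toQuadraticAlgebra (Ideal.Quotient.mk _ p) = aeval ![algebraMap ℝ[X] _ Polynomial.X, ω] p :=
  rfl

theorem toQuadraticAlgebra_aeval (p : ℝ[X]) :
    toQuadraticAlgebra (Polynomial.aeval x̄ p) = algebraMap ℝ[X] _ p := by
  rw [← Polynomial.aeval_algHom_apply, toQuadraticAlgebra_mk]
  simp [Polynomial.aeval_algebraMap_apply]

noncomputable def ofQuadraticAlgebra : circleQuadraticAlgebra →+* circleRing :=
  letI : Algebra ℝ[X] circleRing := (Polynomial.aeval x̄).toRingHom.toAlgebra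
  (QuadraticAlgebra.lift (A := circleRing) (a := 1 - Polynomial.X ^ 2) (b := 0)
    ⟨ȳ, by simpa [Algebra.smul_def, RingHom.algebraMap_toAlgebra, ← sq] using mk_X_one_sq⟩).toRingHom

theorem ofQuadraticAlgebra_apply (z : circleQuadraticAlgebra) :
    ofQuadraticAlgebra z = Polynomial.aeval x̄ z.re + Polynomial.aeval x̄ z.im * ȳ := by
  simp [ofQuadraticAlgebra, Algebra.smul_def, RingHom.algebraMap_toAlgebra]

noncomputable def equivQuadraticAlgebra : circleRing ≃+* circleQuadraticAlgebra :=
  RingEquiv.ofRingHom toQuadraticAlgebra.toRingHom ofQuadraticAlgebra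
    (by ext z <;> simp [ofQuadraticAlgebra_apply, toQuadraticAlgebra_aeval, toQuadraticAlgebra_mk])
    (by
      apply Ideal.Quotient.ringHom_ext
      apply MvPolynomial.ringHom_ext
      · intro r
        simp [ofQuadraticAlgebra_apply, toQuadraticAlgebra_mk, ← Ideal.Quotient.mk_algebraMap,
          IsScalarTower.algebraMap_apply ℝ ℝ[X] circleQuadraticAlgebra]
      · intro i
        fin_cases i <;> simp [ofQuadraticAlgebra_apply, toQuadraticAlgebra_mk])

end circleRing

/-- The coordinate ring `ℝ[x,y]/(x² + y² − 1)` of the real circle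
`S¹` (an integral domain) is not a unique factorization domain. -/
theorem circleRing_not_UFD [IsDomain circleRing] :
    ¬ UniqueFactorizationMonoid circleRing := by
  intro _
  let e := circleRing.equivQuadraticAlgebra
  have hirr : Irreducible (e.symm (algebraMap ℝ[X] _ Polynomial.X)) :=
    (MulEquiv.irreducible_iff e.symm).2 circleQuadraticAlgebra.irreducible_X
  exact circleQuadraticAlgebra.not_prime_X
    ((MulEquiv.prime_iff e.symm).1 (UniqueFactorizationMonoid.irreducible_iff_prime.1 hirr))
end

section
/- There is no injective ℝ-algebra homomorphism from ℝ[x,y]/(x² + y² − 1) into the ring ℝ[t, t⁻¹] of Laurent polynomials over ℝ. Equivalently, there is no dominant morphism of real affine varieties from the punctured real line ℝ* to the circle S¹, i.e., S¹ cannot be parametrized by Laurent polynomials. -/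
section SorryAux
open Polynomial

open Polynomial

-- step 1: key degree lemma
lemma key (p q : Polynomial ℝ) (h : p^2 + q^2 = 1) (hle : q.natDegree ≤ p.natDegree) :
    p.natDegree = 0 := by
  by_contra hd
  have hdpos : 0 < p.natDegree := Nat.pos_of_ne_zero hd
  have hp0 : p ≠ 0 := fun h0 => by simp [h0] at hdpos
  have h1 : (p^2).coeff (2 * p.natDegree) = p.leadingCoeff ^ 2 :=
    coeff_pow_mul_natDegree p 2
  have h2 : (q^2).coeff (2 * p.natDegree) = (q.coeff p.natDegree) ^ 2 := by
    rcases eq_or_lt_of_le hle with he | hlt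
    · rw [← he] at h1 ⊢
      rw [coeff_pow_mul_natDegree q 2]
      rfl
    · have : (q^2).natDegree < 2 * p.natDegree := by
        calc (q^2).natDegree ≤ 2 * q.natDegree := natDegree_pow_le
        _ < 2 * p.natDegree := by omega
      rw [coeff_eq_zero_of_natDegree_lt this, coeff_eq_zero_of_natDegree_lt hlt]
      ring
  have h3 : (1 : Polynomial ℝ).coeff (2 * p.natDegree) = 0 := by
    rw [coeff_one, if_neg (by omega)]
  have := congrArg (fun r => Polynomial.coeff r (2 * p.natDegree)) h
  simp only [coeff_add, h1, h2, h3] at this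
  have hlc : p.leadingCoeff ≠ 0 := leadingCoeff_ne_zero.mpr hp0
  have := sq_nonneg (q.coeff p.natDegree)
  have h4 : p.leadingCoeff ^ 2 = 0 := by nlinarith [sq_nonneg p.leadingCoeff]
  exact hlc (pow_eq_zero_iff (by norm_num) |>.mp h4)

lemma aux1 (p q : Polynomial ℝ) (h : p^2 + q^2 = 1) : p.natDegree = 0 ∧ q.natDegree = 0 := by
  rcases le_total q.natDegree p.natDegree with hle | hle
  · have := key p q h hle
    refine ⟨this, ?_⟩
    exact key q p (by linear_combination h) (this ▸ Nat.zero_le _)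
  · have := key q p (by linear_combination h) hle
    exact ⟨key p q h (this ▸ Nat.zero_le _), this⟩

lemma aux2 : ∀ n : ℕ, ∀ p q : Polynomial ℝ, p^2 + q^2 = X^(2*n) →
    ∃ a b : ℝ, p = C a * X^n ∧ q = C b * X^n := by
  intro n
  induction n with
  | zero =>
    intro p q h
    rw [mul_zero, pow_zero] at h
    obtain ⟨h1, h2⟩ := aux1 p q h
    exact ⟨p.coeff 0, q.coeff 0, by simp [(eq_C_of_natDegree_eq_zero h1).symm],
      by simp [(eq_C_of_natDegree_eq_zero h2).symm]⟩
  | succ n ih =>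
    intro p q h
    have he : p.eval 0 ^ 2 + q.eval 0 ^ 2 = 0 := by
      have := congrArg (Polynomial.eval 0) h
      simpa using this
    have hp0 : p.coeff 0 = 0 := by
      rw [coeff_zero_eq_eval_zero]; nlinarith [sq_nonneg (p.eval 0), sq_nonneg (q.eval 0)]
    have hq0 : q.coeff 0 = 0 := by
      rw [coeff_zero_eq_eval_zero]; nlinarith [sq_nonneg (p.eval 0), sq_nonneg (q.eval 0)]
    obtain ⟨p', hp⟩ := X_dvd_iff.mpr hp0
    obtain ⟨q', hq⟩ := X_dvd_iff.mpr hq0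
    subst hp hq
    have h' : X^2 * (p'^2 + q'^2) = X^2 * X^(2*n) := by
      rw [← pow_add, show 2 + 2*n = 2*(n+1) by ring, ← h]
      ring
    have := mul_left_cancel₀ (pow_ne_zero 2 (X_ne_zero (R := ℝ))) h'
    obtain ⟨a, b, ha, hb⟩ := ih p' q' this
    exact ⟨a, b, by rw [ha, pow_succ]; ring, by rw [hb, pow_succ]; ring⟩


open LaurentPolynomial in
lemma laurent_const (f g : LaurentPolynomial ℝ) (h : f ^ 2 + g ^ 2 = 1) :
    ∃ a : ℝ, f = LaurentPolynomial.C a := by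
  obtain ⟨m, p, hp⟩ := f.exists_T_pow
  obtain ⟨n, q, hq⟩ := g.exists_T_pow
  have hP : Polynomial.toLaurent (p * Polynomial.X ^ n) = f * T (m + n : ℕ) := by
    rw [map_mul, hp, Polynomial.toLaurent_X_pow, mul_assoc, ← T_add]
    push_cast; ring_nf
  have hQ : Polynomial.toLaurent (q * Polynomial.X ^ m) = g * T (m + n : ℕ) := by
    rw [map_mul, hq, Polynomial.toLaurent_X_pow, mul_assoc, ← T_add]
    push_cast; ring_nf
  have hsum : (p * Polynomial.X ^ n) ^ 2 + (q * Polynomial.X ^ m) ^ 2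
      = Polynomial.X ^ (2 * (m + n)) := by
    apply Polynomial.toLaurent_injective
    rw [map_add, map_pow, map_pow, hP, hQ, Polynomial.toLaurent_X_pow]
    have : ((2 * (m + n) : ℕ) : ℤ) = (m + n : ℕ) + (m + n : ℕ) := by push_cast; ring
    rw [this, T_add]
    push_cast
    linear_combination (T ((m:ℤ) + n))^2 * h
  obtain ⟨a, b, ha, hb⟩ := aux2 (m + n) _ _ hsum
  refine ⟨a, ?_⟩
  have := hP
  rw [ha, map_mul, Polynomial.toLaurent_C, Polynomial.toLaurent_X_pow] at this
  have h2 := congrArg (· * T (-(m + n : ℕ) : ℤ)) this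
  simp only [mul_assoc, ← T_add, add_neg_cancel, T_zero, mul_one] at h2
  exact h2.symm

end SorryAux

open MvPolynomial

set_option maxHeartbeats 1000000 in
set_option synthInstance.maxHeartbeats 1000000 in
/-- There is no injective `ℝ`-algebra homomorphism from the
coordinate ring `ℝ[x,y]/(x² + y² − 1)` of `S¹` into the ring `ℝ[t,t⁻¹]` of Laurent
polynomials over `ℝ`; equivalently, there is no dominant morphism `ℝ* → S¹`, i.e.
`S¹` cannot be parametrized by Laurent polynomials. -/
theorem no_injective_algHom_circleRing_to_laurent :
    ¬ ∃ φ : circleRing →ₐ[ℝ] LaurentPolynomial ℝ, Function.Injective φ := by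
  rintro ⟨φ, hφ⟩
  set s : MvPolynomial (Fin 2) ℝ := X 0 ^ 2 + X 1 ^ 2 - 1 with hs
  set mk := Ideal.Quotient.mk (Ideal.span {s}) with hmkdef
  have hmk : (mk (X 0)) ^ 2 + (mk (X 1)) ^ 2 = 1 := by
    rw [← map_pow mk, ← map_pow mk, ← map_add mk, ← sub_eq_zero, ← map_one mk, ← map_sub mk,
      Ideal.Quotient.eq_zero_iff_mem]
    exact Ideal.subset_span rfl
  have h1 : (φ (mk (X 0))) ^ 2 + (φ (mk (X 1))) ^ 2 = 1 := by
    rw [← map_pow φ, ← map_pow φ, ← map_add φ, hmk, map_one]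
  obtain ⟨a, ha⟩ := laurent_const _ _ h1
  have h2 : φ (mk (X 0 - C a)) = 0 := by
    have hCa : mk (C a) = algebraMap ℝ circleRing a := rfl
    rw [map_sub mk, map_sub φ, hCa, AlgHom.commutes, ha, LaurentPolynomial.algebraMap_apply]
    simp
  have h3 : mk (X 0 - C a) = 0 := hφ (h2.trans (map_zero φ).symm)
  have hmem : (X 0 - C a : MvPolynomial (Fin 2) ℝ) ∈ Ideal.span {s} :=
    (Ideal.Quotient.eq_zero_iff_mem).mp h3
  rw [Ideal.mem_span_singleton] at hmem
  obtain ⟨c, hc⟩ := hmem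
  have e1 := congrArg (MvPolynomial.eval ![1, 0]) hc
  have e2 := congrArg (MvPolynomial.eval ![-1, 0]) hc
  simp [hs] at e1 e2
  linarith
end

section
/- Let F be a formally real field (i.e., −1 is not a sum of squares in F) and let a ∈ F be nonzero. Then the ring F[X,Y]/(X² + Y² + a²) is a unique factorization domain. -/
/-!
Write `F[X,Y]/(X² + Y² + a²)` as the quadratic algebra `F[X][ω]` with `ω² = -(X² + a²)` and
norm `N(p + qω) = p² + (X² + a²) q²`. As `-1` is not a square in `F`, the leading coefficients
show that the norm is anisotropic, so the ring is a domain; we show it is a PID.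

A nonzero prime `𝔭` lies over a prime `f` of `F[X]`. If `f` divides no `d² + X² + a²`, then
`𝔭 = (f)`. Otherwise `f` is a norm up to a unit, by Fermat's descent on `deg f`: reducing `d`
modulo `f` gives `d² + X² + a² = f G` with `deg G < deg f` (linear `f` are excluded because
`-a²` is not a sum of two squares), so by induction every prime factor of `G` is a norm `N(w)`,
and Euler's argument (`N(w)` divides `z w̄` or `z w` whenever it divides `N(z)`) removes these
factors from `N(d + ω)` one at a time. Then `𝔭` contains `w` or `w̄`, and that element generates
`𝔭`.
-/

namespace QuadraticAlgebra

open Polynomial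

section CommRing

variable {R : Type*} [CommRing R] {m : R}

theorem norm_eq_sq_add_mul_sq (z : QuadraticAlgebra R (-m) 0) :
    norm z = z.re ^ 2 + m * z.im ^ 2 := by
  rw [norm_def]; ring

theorem algebraMap_dvd_of_dvd_im {f : R} (hf : Prime f) {z : QuadraticAlgebra R (-m) 0}
    (him : f ∣ z.im) (hnorm : f ∣ norm z) : algebraMap R _ f ∣ z := by
  refine algebraMap_dvd_iff.mpr ⟨hf.dvd_of_dvd_pow (n := 2) ?_, him⟩
  have hsq : z.re ^ 2 = norm z - m * z.im ^ 2 := by rw [norm_eq_sq_add_mul_sq]; ring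
  rw [hsq]
  exact dvd_sub hnorm ((dvd_pow him two_ne_zero).mul_left m)

theorem exists_dvd_sq_add_of_isCoprime {f : R} {z : QuadraticAlgebra R (-m) 0}
    (hcop : IsCoprime f z.im) (hnorm : f ∣ norm z) : ∃ d, f ∣ d ^ 2 + m := by
  obtain ⟨u, v, huv⟩ := hcop
  obtain ⟨n, hn⟩ := hnorm
  -- `v` inverts `z.im` modulo `f`, so `d = z.re * v` is a square root of `-m` modulo `f`.
  refine ⟨z.re * v, v ^ 2 * n + m * u * (v * z.im + 1), ?_⟩
  rw [norm_eq_sq_add_mul_sq] at hn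
  linear_combination v ^ 2 * hn - m * (v * z.im + 1) * huv

theorem dvd_im_mul_star_mul_im_mul {p : R} {z w : QuadraticAlgebra R (-m) 0}
    (hz : p ∣ norm z) (hw : p ∣ norm w) : p ∣ (z * star w).im * (z * w).im := by
  have key : (z * star w).im * (z * w).im = z.im ^ 2 * norm w - w.im ^ 2 * norm z := by
    simp only [im_mul, re_star, im_star, norm_eq_sq_add_mul_sq]; ring
  rw [key]
  exact dvd_sub (hw.mul_left _) (hz.mul_left _)

variable [IsDomain R]

theorem exists_mul_norm_eq_norm_mul {p u : R} (hp : Prime p) {z w : QuadraticAlgebra R (-m) 0}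
    (hw : p * u = norm w) (hz : p ∣ norm z) :
    ∃ z' : QuadraticAlgebra R (-m) 0, p * norm z' = norm z * u := by
  have hpw : p ∣ norm w := ⟨u, hw.symm⟩
  -- `z'` is `z w̄ / p` or `z w / p`.
  obtain ⟨w', hw', z', hz'⟩ : ∃ w', norm w' = norm w ∧ algebraMap R _ p ∣ z * w' := by
    rcases hp.dvd_or_dvd (dvd_im_mul_star_mul_im_mul hz hpw) with h | h
    · exact ⟨star w, norm_star w,
        algebraMap_dvd_of_dvd_im hp h (by rw [map_mul]; exact hz.mul_right _)⟩
    · exact ⟨w, rfl, algebraMap_dvd_of_dvd_im hp h (by rw [map_mul]; exact hz.mul_right _)⟩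
  refine ⟨z', mul_left_cancel₀ hp.ne_zero ?_⟩
  have := congrArg norm hz'
  rw [map_mul, map_mul, norm_algebraMap, hw', ← hw] at this
  linear_combination -this

theorem exists_associated_norm_of_norm_eq_mul [UniqueFactorizationMonoid R] {G : R} (hG : G ≠ 0)
    (hfac : ∀ p, Prime p → p ∣ G → ∃ w : QuadraticAlgebra R (-m) 0, Associated p (norm w))
    {f : R} {z : QuadraticAlgebra R (-m) 0} (hz : norm z = f * G) :
    ∃ w : QuadraticAlgebra R (-m) 0, Associated f (norm w) := by
  induction G using UniqueFactorizationMonoid.induction_on_prime generalizing f z with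
  | h₁ => exact absurd rfl hG
  | h₂ u hu => exact ⟨z, hz ▸ associated_mul_unit_right f u hu⟩
  | h₃ G p hG0 hp ih =>
    obtain ⟨w, v, hv⟩ := hfac p hp (dvd_mul_right p G)
    obtain ⟨z', hz'⟩ := exists_mul_norm_eq_norm_mul hp hv
      (hz ▸ (dvd_mul_right p G).mul_left f)
    obtain ⟨w', hw'⟩ := ih hG0 (fun q hq hqG => hfac q hq (hqG.mul_left p)) (f := f * v)
      (z := z') (mul_left_cancel₀ hp.ne_zero (by rw [hz', hz]; ring))
    exact ⟨w', (associated_mul_unit_right f v v.isUnit).trans hw'⟩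

theorem eq_span_singleton_of_associated_norm {f : R} (hf : Prime f)
    {N : Ideal (QuadraticAlgebra R (-m) 0)} (hN : N.comap (algebraMap R _) ≤ Ideal.span {f})
    {w : QuadraticAlgebra R (-m) 0} (hwN : w ∈ N) (hw : Associated f (norm w)) :
    N = Ideal.span {w} := by
  refine le_antisymm (fun s hs => ?_) ((Ideal.span_singleton_le_iff_mem N).mpr hwN)
  obtain ⟨u, hu⟩ := hw
  have hcross : algebraMap R _ (w.im * s.re - s.im * w.re) ∈ N := by
    have : algebraMap R _ (w.im * s.re - s.im * w.re) =
        algebraMap R _ w.im * s - algebraMap R _ s.im * w := by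
      ext <;> simp [mul_comm]
    rw [this]
    exact N.sub_mem (N.mul_mem_left _ hs) (N.mul_mem_left _ hwN)
  have him : f ∣ (s * star w).im := by
    obtain ⟨k, hk⟩ := Ideal.mem_span_singleton'.mp (hN hcross)
    exact ⟨-k, by simp only [im_mul, re_star, im_star]; linear_combination hk⟩
  -- `f ∣ s w̄` and `w w̄ = f u`, hence `w ∣ s`.
  obtain ⟨y, hy⟩ := algebraMap_dvd_of_dvd_im hf him
    (by rw [map_mul, norm_star, ← hu]; exact (dvd_mul_right f _).mul_left _)
  have hsu : s * algebraMap R _ ↑u = y * w := by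
    refine (mul_cancel_left_mem_nonZeroDivisors
      ((algebraMap_mem_nonZeroDivisors_iff (a := -m) (b := 0)).mpr
        (mem_nonZeroDivisors_of_ne_zero hf.ne_zero))).mp ?_
    calc algebraMap R _ f * (s * algebraMap R _ ↑u)
        = s * algebraMap R _ (norm w) := by rw [← hu, map_mul]; ring
      _ = (s * star w) * w := by rw [algebraMap_norm_eq_mul_star]; ring
      _ = algebraMap R _ f * (y * w) := by rw [hy]; ring
  exact Ideal.mem_span_singleton.mpr
    (((u.isUnit.map (algebraMap R _)).dvd_mul_right).mp ⟨y, by rw [hsu, mul_comm]⟩)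

theorem eq_span_algebraMap_of_forall_not_dvd [IsBezout R] {f : R} (hf : Prime f)
    {N : Ideal (QuadraticAlgebra R (-m) 0)} (hN : N.comap (algebraMap R _) = Ideal.span {f})
    (hinert : ∀ d, ¬ f ∣ d ^ 2 + m) : N = Ideal.span {algebraMap R _ f} := by
  refine le_antisymm (fun s hs => ?_) ?_
  · have hfs : f ∣ norm s := by
      rw [← Ideal.mem_span_singleton, ← hN, Ideal.mem_comap, algebraMap_norm_eq_mul_star]
      exact N.mul_mem_right _ hs
    have him : f ∣ s.im := by_contra fun h => (exists_dvd_sq_add_of_isCoprime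
      (hf.irreducible.coprime_iff_not_dvd.mpr h) hfs).elim hinert
    exact Ideal.mem_span_singleton.mpr (algebraMap_dvd_of_dvd_im hf him hfs)
  · rw [Ideal.span_singleton_le_iff_mem, ← Ideal.mem_comap, hN]
    exact Ideal.mem_span_singleton_self f

end CommRing

section Polynomial

variable {F : Type*} [Field F]

theorem eq_zero_of_norm_eq_zero {m : F[X]} (hm : m.Monic) (hsq : ∀ x : F, x ^ 2 + 1 ≠ 0)
    {z : QuadraticAlgebra F[X] (-m) 0} (h : norm z = 0) : z = 0 := by
  rw [norm_eq_sq_add_mul_sq] at h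
  by_cases him : z.im = 0
  · exact QuadraticAlgebra.ext (by simpa [him] using h) him
  · have hlc := congrArg leadingCoeff (eq_neg_of_add_eq_zero_left h)
    rw [leadingCoeff_pow, leadingCoeff_neg, leadingCoeff_mul, leadingCoeff_pow, hm.leadingCoeff,
      one_mul] at hlc
    have hlc0 : z.im.leadingCoeff ≠ 0 := leadingCoeff_ne_zero.mpr him
    exact (hsq (z.re.leadingCoeff / z.im.leadingCoeff) (by field_simp; linear_combination hlc)).elim

theorem isDomain {m : F[X]} (hm : m.Monic) (hsq : ∀ x : F, x ^ 2 + 1 ≠ 0) :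
    IsDomain (QuadraticAlgebra F[X] (-m) 0) := by
  have : NoZeroDivisors (QuadraticAlgebra F[X] (-m) 0) := ⟨fun {z w} h => by
    have := congrArg norm h
    rw [map_mul, norm_zero] at this
    exact (mul_eq_zero.mp this).imp (eq_zero_of_norm_eq_zero hm hsq)
      (eq_zero_of_norm_eq_zero hm hsq)⟩
  exact NoZeroDivisors.to_isDomain _

variable {c : F}

theorem sq_add_X_sq_add_C_ne_zero (hc : ∀ x y : F, x ^ 2 + y ^ 2 + c ≠ 0) (d : F[X]) :
    d ^ 2 + (X ^ 2 + C c) ≠ 0 := fun h =>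
  hc (d.eval 0) 0 (by simpa using congrArg (eval 0) h)

theorem not_dvd_sq_add_X_sq_add_C (hc : ∀ x y : F, x ^ 2 + y ^ 2 + c ≠ 0) {f : F[X]}
    (hf : f.degree = 1) (d : F[X]) :
    ¬ f ∣ d ^ 2 + (X ^ 2 + C c) := fun hdvd => by
  obtain ⟨r, hr⟩ := exists_root_of_degree_eq_one hf
  have := eval_eq_zero_of_dvd_of_eval_eq_zero hdvd hr
  simp only [eval_add, eval_pow, eval_X, eval_C] at this
  exact hc (d.eval r) r (by linear_combination this)

theorem exists_associated_norm_of_dvd_sq_add (hc : ∀ x y : F, x ^ 2 + y ^ 2 + c ≠ 0)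
    {f d : F[X]} (hf : Prime f) (hfd : f ∣ d ^ 2 + (X ^ 2 + C c)) :
    ∃ w : QuadraticAlgebra F[X] (-(X ^ 2 + C c)) 0, Associated f (norm w) := by
  have hf0 : f.natDegree ≠ 0 := hf.irreducible.natDegree_pos.ne'
  have hf1 : f.natDegree ≠ 1 := fun h => not_dvd_sq_add_X_sq_add_C hc
    ((degree_eq_iff_natDegree_eq hf.ne_zero).mpr h) d hfd
  set r := d % f
  have hr : r.natDegree < f.natDegree := natDegree_mod_lt d hf0
  obtain ⟨G, hG⟩ : f ∣ r ^ 2 + (X ^ 2 + C c) := by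
    have : r ^ 2 + (X ^ 2 + C c) = d ^ 2 + (X ^ 2 + C c) - f * (d / f) * (d + r) := by
      linear_combination (d + r) * EuclideanDomain.div_add_mod d f
    rw [this]
    exact dvd_sub hfd ((dvd_mul_right f _).mul_right _)
  have hG0 : G ≠ 0 := fun h => sq_add_X_sq_add_C_ne_zero hc r (by rw [hG, h, mul_zero])
  have hGdeg : G.natDegree < f.natDegree := by
    have hle : (r ^ 2 + (X ^ 2 + C c)).natDegree ≤ max (2 * r.natDegree) 2 :=
      (natDegree_add_le _ _).trans
        (max_le_max (natDegree_pow_le.trans (by rw [mul_comm])) natDegree_X_pow_add_C.le)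
    rw [hG, natDegree_mul hf.ne_zero hG0] at hle
    omega
  refine exists_associated_norm_of_norm_eq_mul hG0 (fun p hp hpG => ?_) (z := ⟨r, 1⟩)
    (by rw [norm_eq_sq_add_mul_sq, ← hG]; ring)
  exact exists_associated_norm_of_dvd_sq_add hc hp (hpG.trans ⟨f, by rw [hG, mul_comm]⟩)
termination_by f.natDegree
decreasing_by exact (natDegree_le_of_dvd hpG hG0).trans_lt hGdeg

theorem isPrincipalIdealRing (hsq : ∀ x : F, x ^ 2 + 1 ≠ 0)
    (hc : ∀ x y : F, x ^ 2 + y ^ 2 + c ≠ 0) :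
    IsPrincipalIdealRing (QuadraticAlgebra F[X] (-(X ^ 2 + C c)) 0) := by
  refine IsPrincipalIdealRing.of_prime fun N hN => ?_
  rcases eq_or_ne N ⊥ with rfl | hbot
  · exact bot_isPrincipal
  set P := N.comap (algebraMap F[X] (QuadraticAlgebra F[X] (-(X ^ 2 + C c)) 0))
  have hP : P ≠ ⊥ := by
    obtain ⟨z, hzN, hz0⟩ := Submodule.exists_mem_ne_zero_of_ne_bot hbot
    have hzP : norm z ∈ P := by
      rw [Ideal.mem_comap, algebraMap_norm_eq_mul_star]
      exact N.mul_mem_right _ hzN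
    refine fun h => hz0 (eq_zero_of_norm_eq_zero (monic_X_pow_add_C c two_ne_zero) hsq ?_)
    rwa [h, Ideal.mem_bot] at hzP
  have hf := Submodule.IsPrincipal.prime_generator_of_isPrime P hP
  have hPf : P = Ideal.span {_} := (Ideal.span_singleton_generator P).symm
  by_cases hsplit : ∃ d, Submodule.IsPrincipal.generator P ∣ d ^ 2 + (X ^ 2 + C c)
  · obtain ⟨d, hd⟩ := hsplit
    obtain ⟨w, hw⟩ := exists_associated_norm_of_dvd_sq_add hc hf hd
    have hwN : w * star w ∈ N := by
      rw [← algebraMap_norm_eq_mul_star]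
      change norm w ∈ P
      exact hPf ▸ Ideal.mem_span_singleton.mpr hw.dvd
    rcases hN.mem_or_mem hwN with hwN | hwN
    · exact ⟨w, eq_span_singleton_of_associated_norm hf hPf.le hwN hw⟩
    · exact ⟨star w, eq_span_singleton_of_associated_norm hf hPf.le hwN (by rwa [norm_star])⟩
  · exact ⟨_, eq_span_algebraMap_of_forall_not_dvd hf hPf (not_exists.mp hsplit)⟩

end Polynomial

end QuadraticAlgebra

open MvPolynomial

namespace MvPolynomial

variable {R : Type*} [CommRing R] (c : R)

local notation "I" => Ideal.span {(X 0 ^ 2 + X 1 ^ 2 + C c : MvPolynomial (Fin 2) R)}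
local notation "Q" => QuadraticAlgebra (Polynomial R) (-(Polynomial.X ^ 2 + Polynomial.C c)) 0

noncomputable def toQuadraticAlgebra : (MvPolynomial (Fin 2) R ⧸ I) →ₐ[R] Q :=
  Ideal.Quotient.liftₐ _
    (aeval ![algebraMap (Polynomial R) Q Polynomial.X, QuadraticAlgebra.omega])
    (fun p hp => by
      obtain ⟨q, rfl⟩ := Ideal.mem_span_singleton'.mp hp
      rw [map_mul]
      refine mul_eq_zero_of_right _ (QuadraticAlgebra.ext ?_ ?_) <;>
        simp [sq, IsScalarTower.algebraMap_apply R (Polynomial R) Q])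

theorem toQuadraticAlgebra_mk (p : MvPolynomial (Fin 2) R) :
    toQuadraticAlgebra c (Ideal.Quotient.mk I p) =
      aeval ![algebraMap (Polynomial R) Q Polynomial.X, QuadraticAlgebra.omega] p :=
  rfl

noncomputable def ofQuadraticAlgebra : Q →+* MvPolynomial (Fin 2) R ⧸ I :=
  let ι := Polynomial.aeval (R := R) (Ideal.Quotient.mk I (X 0))
  let y := Ideal.Quotient.mk I (X 1)
  have hy : y ^ 2 = ι (-(Polynomial.X ^ 2 + Polynomial.C c)) := by
    have h0 : Ideal.Quotient.mk I (X 0 ^ 2 + X 1 ^ 2 + C c) = 0 :=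
      Ideal.Quotient.eq_zero_iff_mem.mpr (Ideal.mem_span_singleton_self _)
    simp only [map_add, map_pow, map_neg, Polynomial.aeval_X, Polynomial.aeval_C, ι, y] at h0 ⊢
    rw [← Ideal.Quotient.mk_algebraMap, algebraMap_eq]
    linear_combination h0
  { toFun z := ι z.re + ι z.im * y
    map_one' := by simp [QuadraticAlgebra.re_one, QuadraticAlgebra.im_one]
    map_mul' z w := by
      simp only [QuadraticAlgebra.re_mul, QuadraticAlgebra.im_mul, map_add, map_mul, zero_mul,
        add_zero]
      linear_combination -(ι z.im * ι w.im) * hy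
    map_zero' := by simp only [QuadraticAlgebra.re_zero, QuadraticAlgebra.im_zero, map_zero]; ring
    map_add' z w := by simp only [QuadraticAlgebra.re_add, QuadraticAlgebra.im_add, map_add]; ring }

theorem toQuadraticAlgebra_aeval (p : Polynomial R) :
    toQuadraticAlgebra c (Polynomial.aeval (Ideal.Quotient.mk I (X 0)) p) = algebraMap _ Q p := by
  have : (toQuadraticAlgebra c).comp (Polynomial.aeval (Ideal.Quotient.mk I (X 0))) =
      IsScalarTower.toAlgHom R (Polynomial R) Q :=
    Polynomial.algHom_ext (by simp [toQuadraticAlgebra_mk])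
  exact congrArg (fun φ : Polynomial R →ₐ[R] Q => φ p) this

noncomputable def quotientEquivQuadraticAlgebra : (MvPolynomial (Fin 2) R ⧸ I) ≃+* Q :=
  RingEquiv.ofRingHom (toQuadraticAlgebra c : (MvPolynomial (Fin 2) R ⧸ I) →+* Q)
    (ofQuadraticAlgebra c)
    (RingHom.ext fun z => by
      change toQuadraticAlgebra c (_ + _ * _) = z
      rw [map_add, map_mul, toQuadraticAlgebra_aeval, toQuadraticAlgebra_aeval,
        toQuadraticAlgebra_mk]
      refine QuadraticAlgebra.ext ?_ ?_ <;> simp)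
    (Ideal.Quotient.ringHom_ext (MvPolynomial.ringHom_ext
      (fun r => by
        simp [toQuadraticAlgebra_mk, ofQuadraticAlgebra,
          IsScalarTower.algebraMap_apply R (Polynomial R) Q, ← Ideal.Quotient.mk_algebraMap])
      (fun i => by fin_cases i <;> simp [toQuadraticAlgebra_mk, ofQuadraticAlgebra])))

end MvPolynomial

theorem UFD_of_formally_real_general (F : Type) [Field F]
    (hFR : ∀ (n : ℕ) (f : Fin n → F), (∑ i, f i ^ 2) ≠ -1)
    (a : F) (ha : a ≠ 0) :
    UniqueFactorizationMonoid (MvPolynomial (Fin 2) F ⧸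
      Ideal.span {(X 0 : MvPolynomial (Fin 2) F) ^ 2 + (X 1 : MvPolynomial (Fin 2) F) ^ 2 +
        C (a ^ 2)}) := by
  have hsq : ∀ x : F, x ^ 2 + 1 ≠ 0 := fun x h =>
    hFR 1 ![x] (by simpa using eq_neg_of_add_eq_zero_left h)
  have hc : ∀ x y : F, x ^ 2 + y ^ 2 + a ^ 2 ≠ 0 := fun x y h =>
    hFR 2 ![x / a, y / a] (by
      simp only [Fin.sum_univ_two, Matrix.cons_val_zero, Matrix.cons_val_one]
      field_simp
      linear_combination h)
  have := QuadraticAlgebra.isDomain (Polynomial.monic_X_pow_add_C (a ^ 2) two_ne_zero) hsq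
  have := QuadraticAlgebra.isPrincipalIdealRing hsq hc
  exact (quotientEquivQuadraticAlgebra (a ^ 2)).symm.toMulEquiv.uniqueFactorizationMonoid
    PrincipalIdealRing.to_uniqueFactorizationMonoid

/-- Let `F` be a formally real field (`−1` is not a sum of squares
in `F`) and let `a ∈ F` be nonzero.  Then `F[X,Y]/(X² + Y² + a²)` (an integral
domain) is a unique factorization domain. -/
theorem UFD_of_formally_real (F : Type) [Field F]
    (hFR : ∀ (n : ℕ) (f : Fin n → F), (∑ i, f i ^ 2) ≠ -1)
    (a : F) (ha : a ≠ 0)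
    [IsDomain (MvPolynomial (Fin 2) F ⧸
      Ideal.span {(X 0 : MvPolynomial (Fin 2) F) ^ 2 + (X 1 : MvPolynomial (Fin 2) F) ^ 2 +
        C (a ^ 2)})] :
    UniqueFactorizationMonoid (MvPolynomial (Fin 2) F ⧸
      Ideal.span {(X 0 : MvPolynomial (Fin 2) F) ^ 2 + (X 1 : MvPolynomial (Fin 2) F) ^ 2 +
        C (a ^ 2)}) :=
  UFD_of_formally_real_general F hFR a ha
end
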